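/- arXiv:1502.03983 — 8 statements merged into one kernel-verified Lean document; each statement's English description precedes it below -/
import Mathlib

section
/- Let a_1, b_1, a_2, b_2, ... be real numbers and define s_{ij} for i, j ≥ 1 recursively by s_{ij} = s_{i-1,j} - s_{i,j-1}, with initial values s_{0k} = a_k and s_{k0} = b_k for all k ≥ 1. Then for all i, j ≥ 1, s_{ij} = Σ_{k=1}^{j} (-1)^{j-k} C(i+j-k-1, i-1) a_k + (-1)^j Σ_{k=1}^{i} C(i+j-k-1, j-1) b_k. -/
noncomputable def Faux (a b : ℕ → ℝ) (i j : ℕ) : ℝ :=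
  (∑ k ∈ Finset.Icc 1 j,
      (-1 : ℝ) ^ (j - k) * ((i + j - k - 1).choose (i - 1) : ℝ) * a k)
    + (-1 : ℝ) ^ j * ∑ k ∈ Finset.Icc 1 i,
        ((i + j - k - 1).choose (j - 1) : ℝ) * b k

lemma Faux_11 (a b : ℕ → ℝ) : Faux a b 1 1 = a 1 - b 1 := by
  simp [Faux]; ring

lemma Faux_row (a b : ℕ → ℝ) (j : ℕ) :
    Faux a b 1 (j + 2) = a (j + 2) - Faux a b 1 (j + 1) := by
  have e1 : ∀ k ∈ Finset.Icc 1 (j+1),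
      (-1:ℝ)^(j+2-k) * ((1 + (j+2) - k - 1).choose (1-1) : ℝ) * a k
      = -((-1:ℝ)^(j+1-k) * ((1 + (j+1) - k - 1).choose (1-1) : ℝ) * a k) := by
    intro k hk
    simp only [Finset.mem_Icc] at hk
    have h2 : j + 2 - k = (j + 1 - k) + 1 := by omega
    simp only [h2, pow_succ, Nat.sub_self, Nat.choose_zero_right, Nat.cast_one]
    ring
  simp only [Faux, Finset.Icc_self, Finset.sum_singleton]
  rw [Finset.sum_Icc_succ_top (by omega : 1 ≤ j + 2),
      Finset.sum_congr rfl e1, Finset.sum_neg_distrib]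
  have c1 : (1 + (j+2) - (j+2) - 1).choose (1-1) = 1 := by simp
  have c2 : (1 + (j+2) - 1 - 1).choose (j+2-1) = 1 := by
    have h : 1 + (j+2) - 1 - 1 = j+1 := by omega
    rw [h]; exact Nat.choose_self _
  have c3 : (1 + (j+1) - 1 - 1).choose (j+1-1) = 1 := by
    have h : 1 + (j+1) - 1 - 1 = j := by omega
    rw [h]; exact Nat.choose_self _
  simp only [c1, c2, c3, Nat.cast_one, Nat.sub_self, pow_zero, pow_succ]
  ring

lemma Faux_col (a b : ℕ → ℝ) (i : ℕ) :
    Faux a b (i + 2) 1 = Faux a b (i + 1) 1 - b (i + 2) := by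
  have e1 : ∀ k ∈ Finset.Icc 1 (i+1),
      (((i+2) + 1 - k - 1).choose (1-1) : ℝ) * b k
      = (((i+1) + 1 - k - 1).choose (1-1) : ℝ) * b k := by
    intro k hk
    simp only [Nat.sub_self, Nat.choose_zero_right]
  simp only [Faux, Finset.Icc_self, Finset.sum_singleton]
  rw [Finset.sum_Icc_succ_top (by omega : 1 ≤ i + 2),
      Finset.sum_congr rfl e1]
  have c1 : ((i+2) + 1 - 1 - 1).choose ((i+2)-1) = 1 := by
    have h : (i+2) + 1 - 1 - 1 = i+1 := by omega
    rw [h, show (i+2)-1 = i+1 by omega]; exact Nat.choose_self _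
  have c2 : ((i+1) + 1 - 1 - 1).choose ((i+1)-1) = 1 := by
    have h : (i+1) + 1 - 1 - 1 = i := by omega
    rw [h, show (i+1)-1 = i by omega]; exact Nat.choose_self _
  have c3 : ((i+2) + 1 - (i+2) - 1).choose (1-1) = 1 := by simp
  simp only [c1, c2, c3, Nat.cast_one, pow_one]
  ring

lemma Faux_rec (a b : ℕ → ℝ) (i j : ℕ) :
    Faux a b (i + 2) (j + 2) = Faux a b (i + 1) (j + 2) - Faux a b (i + 2) (j + 1) := by
  have keyA : ∀ k ∈ Finset.Icc 1 (j+1),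
      (-1:ℝ)^(j+2-k) * (((i+2)+(j+2)-k-1).choose ((i+2)-1) : ℝ) * a k
      = (-1:ℝ)^(j+2-k) * (((i+1)+(j+2)-k-1).choose ((i+1)-1) : ℝ) * a k
        - (-1:ℝ)^(j+1-k) * (((i+2)+(j+1)-k-1).choose ((i+2)-1) : ℝ) * a k := by
    intro k hk
    simp only [Finset.mem_Icc] at hk
    have h1 : (i+2)+(j+2)-k-1 = ((i+1)+(j+2)-k-1) + 1 := by omega
    have h2 : (i+2)+(j+1)-k-1 = (i+1)+(j+2)-k-1 := by omega
    have h3 : j+2-k = (j+1-k)+1 := by omega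
    rw [h1, h2, h3, show (i+2)-1 = i+1 by omega, show (i+1)-1 = i by omega,
        Nat.choose_succ_succ]
    push_cast
    ring
  have hA : (∑ k ∈ Finset.Icc 1 (j+2),
        (-1:ℝ)^(j+2-k) * (((i+2)+(j+2)-k-1).choose ((i+2)-1) : ℝ) * a k)
      = (∑ k ∈ Finset.Icc 1 (j+2),
          (-1:ℝ)^(j+2-k) * (((i+1)+(j+2)-k-1).choose ((i+1)-1) : ℝ) * a k)
        - (∑ k ∈ Finset.Icc 1 (j+1),
            (-1:ℝ)^(j+1-k) * (((i+2)+(j+1)-k-1).choose ((i+2)-1) : ℝ) * a k) := by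
    rw [Finset.sum_Icc_succ_top (by omega : 1 ≤ j + 2),
        Finset.sum_Icc_succ_top (by omega : 1 ≤ j + 2),
        Finset.sum_congr rfl keyA, Finset.sum_sub_distrib]
    have c1 : ((i+2)+(j+2)-(j+2)-1).choose ((i+2)-1) = 1 := by
      rw [show (i+2)+(j+2)-(j+2)-1 = i+1 by omega, show (i+2)-1 = i+1 by omega]
      exact Nat.choose_self _
    have c2 : ((i+1)+(j+2)-(j+2)-1).choose ((i+1)-1) = 1 := by
      rw [show (i+1)+(j+2)-(j+2)-1 = i by omega, show (i+1)-1 = i by omega]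
      exact Nat.choose_self _
    simp only [c1, c2, Nat.cast_one, Nat.sub_self, pow_zero]
    ring
  have keyB : ∀ k ∈ Finset.Icc 1 (i+1),
      ((((i+2)+(j+2)-k-1).choose ((j+2)-1)) : ℝ) * b k
      = ((((i+1)+(j+2)-k-1).choose ((j+2)-1)) : ℝ) * b k
        + ((((i+2)+(j+1)-k-1).choose ((j+1)-1)) : ℝ) * b k := by
    intro k hk
    simp only [Finset.mem_Icc] at hk
    have h1 : (i+2)+(j+2)-k-1 = ((i+1)+(j+2)-k-1) + 1 := by omega
    have h2 : (i+2)+(j+1)-k-1 = (i+1)+(j+2)-k-1 := by omega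
    rw [h1, h2, show (j+2)-1 = j+1 by omega, show (j+1)-1 = j by omega,
        Nat.choose_succ_succ]
    push_cast
    ring
  have hB : (∑ k ∈ Finset.Icc 1 (i+2),
        ((((i+2)+(j+2)-k-1).choose ((j+2)-1)) : ℝ) * b k)
      = (∑ k ∈ Finset.Icc 1 (i+1),
          ((((i+1)+(j+2)-k-1).choose ((j+2)-1)) : ℝ) * b k)
        + (∑ k ∈ Finset.Icc 1 (i+2),
            ((((i+2)+(j+1)-k-1).choose ((j+1)-1)) : ℝ) * b k) := by
    rw [Finset.sum_Icc_succ_top (by omega : 1 ≤ i + 2),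
        Finset.sum_Icc_succ_top (by omega : 1 ≤ i + 2),
        Finset.sum_congr rfl keyB, Finset.sum_add_distrib]
    have c1 : ((i+2)+(j+2)-(i+2)-1).choose ((j+2)-1) = 1 := by
      rw [show (i+2)+(j+2)-(i+2)-1 = j+1 by omega, show (j+2)-1 = j+1 by omega]
      exact Nat.choose_self _
    have c2 : ((i+2)+(j+1)-(i+2)-1).choose ((j+1)-1) = 1 := by
      rw [show (i+2)+(j+1)-(i+2)-1 = j by omega, show (j+1)-1 = j by omega]
      exact Nat.choose_self _
    simp only [c1, c2, Nat.cast_one]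
    ring
  simp only [Faux]
  rw [hA, hB]
  simp only [pow_succ]
  ring

/-- **Lemma 4.1 (two-dimensional recursion with countably many initial values).**
Let `a_1, b_1, a_2, b_2, …` be real numbers and define `s_{ij}` for `i, j ≥ 1`
recursively by `s_{ij} = s_{i-1,j} - s_{i,j-1}`, with initial values `s_{0k} = a_k`
and `s_{k0} = b_k` for `k ≥ 1`.  Then for all `i, j ≥ 1`,
`s_{ij} = Σ_{k=1}^{j} (-1)^{j-k} C(i+j-k-1, i-1) a_k
          + (-1)^j Σ_{k=1}^{i} C(i+j-k-1, j-1) b_k`. -/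
theorem stmt_0 (a b : ℕ → ℝ) (s : ℕ → ℕ → ℝ)
    (ha : ∀ k, 1 ≤ k → s 0 k = a k)
    (hb : ∀ k, 1 ≤ k → s k 0 = b k)
    (hrec : ∀ i j, 1 ≤ i → 1 ≤ j → s i j = s (i - 1) j - s i (j - 1)) :
    ∀ i j, 1 ≤ i → 1 ≤ j →
      s i j = (∑ k ∈ Finset.Icc 1 j,
          (-1 : ℝ) ^ (j - k) * ((i + j - k - 1).choose (i - 1) : ℝ) * a k)
        + (-1 : ℝ) ^ j * ∑ k ∈ Finset.Icc 1 i,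
            ((i + j - k - 1).choose (j - 1) : ℝ) * b k := by
  have key : ∀ n : ℕ, ∀ i j, i + j ≤ n → 1 ≤ i → 1 ≤ j → s i j = Faux a b i j := by
    intro n
    induction n with
    | zero => intro i j h hi hj; omega
    | succ n ih =>
      intro i j h hi hj
      obtain ⟨i, rfl⟩ : ∃ i', i = i' + 1 := ⟨i - 1, by omega⟩
      obtain ⟨j, rfl⟩ : ∃ j', j = j' + 1 := ⟨j - 1, by omega⟩
      cases i with
      | zero =>
        cases j with
        | zero =>
          rw [hrec 1 1 le_rfl le_rfl, show (1:ℕ)-1 = 0 by omega,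
              ha 1 le_rfl, hb 1 le_rfl, Faux_11]
        | succ j =>
          rw [hrec 1 (j+2) (by omega) (by omega), show (1:ℕ)-1 = 0 by omega,
              show (j+2)-1 = j+1 by omega, ha (j+2) (by omega),
              ih 1 (j+1) (by omega) le_rfl (by omega), Faux_row]
      | succ i =>
        cases j with
        | zero =>
          rw [hrec (i+2) 1 (by omega) (by omega), show (i+2)-1 = i+1 by omega,
              show (1:ℕ)-1 = 0 by omega, hb (i+2) (by omega),
              ih (i+1) 1 (by omega) (by omega) le_rfl, Faux_col]
        | succ j =>
          rw [hrec (i+2) (j+2) (by omega) (by omega), show (i+2)-1 = i+1 by omega,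
              show (j+2)-1 = j+1 by omega,
              ih (i+1) (j+2) (by omega) (by omega) (by omega),
              ih (i+2) (j+1) (by omega) (by omega) (by omega), Faux_rec]
  intro i j hi hj
  rw [key (i + j) i j le_rfl hi hj]
  simp only [Faux]
end

section
/- For every positive integer j, Σ_{k=2}^{∞} 1/(k^j (k-1)^j) = 2 (-1)^j Σ_{m=0}^{⌊j/2⌋} C(2j-2m-1, j-1) ζ(2m). -/
/-
Since `k - (k - 1) = 1`, the partial fraction decomposition of `1 / (k ^ j (k - 1) ^ j)` has
explicit binomial coefficients (Pascal's rule is exactly the recursion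
`1 / (x ^ (a+1) y ^ (b+1)) = 1 / (x ^ a y ^ (b+1)) - 1 / (x ^ (a+1) y ^ b)`):
`1 / (k ^ j (k - 1) ^ j) = ∑_{p=1}^{j} C(2j-1-p, j-1) ((-1)^j / k^p + (-1)^(j-p) / (k-1)^p)`.
Summing over `k ≥ 2`, the power `p ≥ 2` contributes `(-1)^j (ζ(p) - 1) + (-1)^(j-p) ζ(p)`,
so odd powers cancel and even ones double, while the `p = 1` terms telescope. By the hockey-stick
identity the leftover constants add up to `-(-1)^j C(2j-1, j-1) = 2 (-1)^j C(2j-1, j-1) ζ(0)`,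
which is the `m = 0` term.
-/

open Finset

section PartialFractions

variable {K : Type*} [Field K]

def poleSum (s z : K) (a b : ℕ) : K :=
  ∑ i ∈ range (a + 1), s ^ i * (b + i).choose b / z ^ (a + 1 - i)

@[simp]
lemma poleSum_zero_left (s z : K) (b : ℕ) : poleSum s z 0 b = 1 / z := by
  simp [poleSum]

lemma poleSum_succ_zero (s z : K) (a : ℕ) :
    poleSum s z (a + 1) 0 = 1 / z ^ (a + 2) + s * poleSum s z a 0 := by
  simp only [poleSum, sum_range_succ' _ (a + 1), mul_sum]
  simp only [Nat.choose_zero_right, Nat.cast_one, mul_one, pow_zero, Nat.sub_zero,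
    Nat.add_sub_add_right, add_comm (∑ i ∈ _, _)]
  congr 1
  exact sum_congr rfl fun i _ => by ring

lemma poleSum_succ_succ (s z : K) (a b : ℕ) :
    poleSum s z (a + 1) (b + 1) = poleSum s z (a + 1) b + s * poleSum s z a (b + 1) := by
  have pascal (i : ℕ) :
      s ^ (i + 1) * ((b + 1 + (i + 1)).choose (b + 1) : K) / z ^ (a + 1 + 1 - (i + 1))
      = s ^ (i + 1) * ((b + (i + 1)).choose b : K) / z ^ (a + 1 + 1 - (i + 1))
        + s * (s ^ i * ((b + 1 + i).choose (b + 1) : K) / z ^ (a + 1 - i)) := by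
    rw [show b + 1 + (i + 1) = b + 1 + i + 1 by omega, Nat.choose_succ_succ',
      show b + (i + 1) = b + 1 + i by omega, Nat.add_sub_add_right]
    push_cast
    ring
  simp only [poleSum]
  rw [sum_range_succ', sum_range_succ' (fun i => s ^ i * ((b + i).choose b : K) / _), mul_sum]
  simp only [pascal, sum_add_distrib, Nat.choose_self, add_zero]
  ring

variable {x y : K}

lemma one_div_pow_mul_pow_eq_sub (hx : x ≠ 0) (hy : y ≠ 0) (hxy : x - y = 1) (a b : ℕ) :
    1 / (x ^ (a + 1) * y ^ (b + 1)) = 1 / (x ^ a * y ^ (b + 1)) - 1 / (x ^ (a + 1) * y ^ b) := by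
  rw [div_sub_div _ _ (by positivity) (by positivity)]
  field_simp
  linear_combination (-(y ^ b * x ^ a)) * hxy

theorem one_div_pow_mul_pow_eq_poleSum (hx : x ≠ 0) (hy : y ≠ 0) (hxy : x - y = 1) :
    ∀ a b : ℕ, 1 / (x ^ (a + 1) * y ^ (b + 1)) =
      (-1) ^ (b + 1) * poleSum 1 x a b + poleSum (-1) y b a
  | 0, 0 => by
    simp only [poleSum_zero_left, zero_add, pow_one]
    field_simp
    linear_combination -hxy
  | 0, b + 1 => by
    rw [one_div_pow_mul_pow_eq_sub hx hy hxy, one_div_pow_mul_pow_eq_poleSum hx hy hxy 0 b,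
      poleSum_succ_zero]
    simp only [poleSum_zero_left]
    ring
  | a + 1, 0 => by
    rw [one_div_pow_mul_pow_eq_sub hx hy hxy, one_div_pow_mul_pow_eq_poleSum hx hy hxy a 0,
      poleSum_succ_zero]
    simp only [poleSum_zero_left]
    ring
  | a + 1, b + 1 => by
    rw [one_div_pow_mul_pow_eq_sub hx hy hxy, one_div_pow_mul_pow_eq_poleSum hx hy hxy a (b + 1),
      one_div_pow_mul_pow_eq_poleSum hx hy hxy (a + 1) b, poleSum_succ_succ 1 x a b,
      poleSum_succ_succ (-1) y b a]
    ring

lemma one_div_pow_mul_pow_eq_sum (hx : x ≠ 0) (hy : y ≠ 0) (hxy : x - y = 1) (J : ℕ) :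
    1 / (x ^ (J + 1) * y ^ (J + 1)) = ∑ q ∈ range (J + 1), ((2 * J - q).choose J : K) *
      ((-1) ^ (J + 1) / x ^ (q + 1) + (-1) ^ (J + q) / y ^ (q + 1)) := by
  rw [one_div_pow_mul_pow_eq_poleSum hx hy hxy, poleSum, poleSum, mul_sum, ← sum_add_distrib,
    ← sum_range_reflect]
  refine sum_congr rfl fun i hi => ?_
  have hi : i ≤ J := Nat.lt_succ_iff.mp (mem_range.mp hi)
  rw [Nat.add_sub_cancel, show J + (J - i) = 2 * J - i by omega,
    show J + 1 - (J - i) = i + 1 by omega, show J + i = J - i + 2 * i by omega,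
    pow_add (-1 : K) (J - i), pow_mul, neg_one_sq, one_pow, one_pow]
  ring

end PartialFractions

lemma hasSum_one_div_nat_pow {p : ℕ} (hp : 1 < p) :
    HasSum (fun n : ℕ => 1 / (n : ℂ) ^ p) (riemannZeta p) := by
  rw [zeta_nat_eq_tsum_of_gt_one hp]
  have h := Complex.summable_ofReal.mpr (Real.summable_one_div_nat_pow.mpr hp)
  push_cast at h
  exact h.hasSum

lemma hasSum_one_div_nat_add_one_pow {p : ℕ} (hp : 1 < p) :
    HasSum (fun n : ℕ => 1 / ((n : ℂ) + 1) ^ p) (riemannZeta p) := by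
  have := (hasSum_nat_add_iff' 1).mpr (hasSum_one_div_nat_pow hp)
  simpa [zero_pow (by omega : p ≠ 0)] using this

lemma hasSum_one_div_nat_add_two_pow {p : ℕ} (hp : 1 < p) :
    HasSum (fun n : ℕ => 1 / ((n : ℂ) + 2) ^ p) (riemannZeta p - 1) := by
  have := (hasSum_nat_add_iff' 2).mpr (hasSum_one_div_nat_pow hp)
  simpa [sum_range_succ, zero_pow (by omega : p ≠ 0), add_assoc, one_add_one_eq_two] using this

lemma hasSum_one_div_nat_add_one_sub_one_div_nat_add_two :
    HasSum (fun n : ℕ => 1 / ((n : ℂ) + 1) - 1 / ((n : ℂ) + 2)) 1 := by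
  set g : ℕ → ℝ := fun n => 1 / ((n : ℝ) + 1)
  have hg : ∀ n, g (n + 1) = 1 / ((n : ℝ) + 2) := fun n => by simp only [g]; push_cast; ring_nf
  have hreal : HasSum (fun n => g n - g (n + 1)) 1 := by
    rw [hasSum_iff_tendsto_nat_of_nonneg]
    · simp only [sum_range_sub']
      simpa [g] using (tendsto_const_nhds (x := (1 : ℝ))).sub
        (tendsto_one_div_add_atTop_nhds_zero_nat (𝕜 := ℝ))
    · intro n
      rw [sub_nonneg, hg]
      exact one_div_le_one_div_of_le (by positivity) (by linarith)
  have := Complex.hasSum_ofReal.mpr hreal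
  simp only [hg, g] at this
  push_cast at this
  exact this

lemma hasSum_div_nat_add_two_pow_add_div_nat_add_one_pow {p : ℕ} (hp : 1 ≤ p) {s t : ℂ}
    (hst : p = 1 → s + t = 0) :
    HasSum (fun n : ℕ => s / ((n : ℂ) + 2) ^ p + t / ((n : ℂ) + 1) ^ p)
      ((s + t) * riemannZeta p - s) := by
  rcases hp.eq_or_lt with rfl | hp
  -- at `p = 1` the value `riemannZeta 1` is not the series, but its coefficient `s + t` is `0`
  · obtain rfl : t = -s := by linear_combination hst rfl
    rw [add_neg_cancel, zero_mul, zero_sub, ← mul_one (-s)]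
    exact (hasSum_one_div_nat_add_one_sub_one_div_nat_add_two.mul_left (-s)).congr_fun
      fun n => by ring
  · rw [show (s + t) * riemannZeta p - s = s * (riemannZeta p - 1) + t * riemannZeta p by ring]
    exact (((hasSum_one_div_nat_add_two_pow hp).mul_left s).add
      ((hasSum_one_div_nat_add_one_pow hp).mul_left t)).congr_fun fun n => by ring

lemma hasSum_one_div_nat_add_two_pow_mul_nat_add_one_pow (J : ℕ) :
    HasSum (fun n : ℕ => 1 / (((n : ℂ) + 2) ^ (J + 1) * ((n : ℂ) + 1) ^ (J + 1)))
      (∑ q ∈ range (J + 1), ((2 * J - q).choose J : ℂ) *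
        (((-1) ^ (J + 1) + (-1) ^ (J + q)) * riemannZeta (q + 1 : ℕ) - (-1) ^ (J + 1))) := by
  have hterm (q : ℕ) (_ : q ∈ range (J + 1)) :=
    (hasSum_div_nat_add_two_pow_add_div_nat_add_one_pow (p := q + 1) (s := (-1) ^ (J + 1))
      (t := (-1) ^ (J + q)) (by omega) fun hq => by
        rw [Nat.succ_inj.mp hq, add_zero, pow_succ]; ring).mul_left ((2 * J - q).choose J : ℂ)
  exact (hasSum_sum hterm).congr_fun fun n =>
    one_div_pow_mul_pow_eq_sum (by norm_cast) (by norm_cast) (by ring) J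

lemma sum_range_one_add_neg_one_pow_mul {R : Type*} [CommRing R] (g : ℕ → R) (n : ℕ) :
    ∑ p ∈ range (n + 1), (1 + (-1) ^ p) * g p = 2 * ∑ m ∈ range (n / 2 + 1), g (2 * m) := by
  induction n with
  | zero => norm_num [one_add_one_eq_two]
  | succ n ih =>
    rw [sum_range_succ, ih]
    rcases Nat.even_or_odd (n + 1) with hn | hn
    · rw [show (n + 1) / 2 + 1 = n / 2 + 1 + 1 by grind, sum_range_succ _ (n / 2 + 1),
        show 2 * (n / 2 + 1) = n + 1 by grind, hn.neg_one_pow]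
      ring
    · rw [show (n + 1) / 2 = n / 2 by grind, hn.neg_one_pow]
      ring

lemma sum_choose_mul_zeta_eq (J : ℕ) :
    ∑ q ∈ range (J + 1), ((2 * J - q).choose J : ℂ) *
        (((-1) ^ (J + 1) + (-1) ^ (J + q)) * riemannZeta (q + 1 : ℕ) - (-1) ^ (J + 1))
      = 2 * (-1) ^ (J + 1) * ∑ m ∈ range ((J + 1) / 2 + 1),
          ((2 * (J + 1) - 2 * m - 1).choose J : ℂ) * riemannZeta (2 * (m : ℂ)) := by
  set g : ℕ → ℂ := fun p => ((2 * J + 1 - p).choose J : ℂ) * riemannZeta p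
  have hockey : ∑ q ∈ range (J + 1), ((2 * J - q).choose J : ℂ) = (2 * J + 1).choose J := by
    rw [← sum_range_reflect, ← Nat.choose_symm_half, two_mul, ← Nat.sum_range_add_choose]
    push_cast
    refine sum_congr rfl fun i hi => ?_
    rw [show J + J - (J - i) = i + J by have := mem_range.mp hi; omega]
  have hg0 : 2 * g 0 = -((2 * J + 1).choose J : ℂ) := by
    simp only [g, Nat.sub_zero, Nat.cast_zero, riemannZeta_zero]
    ring
  calc _ = (-1) ^ (J + 1) * (∑ q ∈ range (J + 1), (1 + (-1) ^ (q + 1)) * g (q + 1)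
          - ∑ q ∈ range (J + 1), ((2 * J - q).choose J : ℂ)) := by
        rw [mul_sub, mul_sum, mul_sum, ← sum_sub_distrib]
        refine sum_congr rfl fun q _ => ?_
        simp only [g, Nat.add_sub_add_right]
        ring
    _ = (-1) ^ (J + 1) * ∑ p ∈ range (J + 1 + 1), (1 + (-1) ^ p) * g p := by
        rw [sum_range_succ' _ (J + 1), hockey, pow_zero, one_add_one_eq_two, hg0, sub_eq_add_neg]
    _ = _ := by
        rw [sum_range_one_add_neg_one_pow_mul, ← mul_assoc, mul_comm _ (2 : ℂ)]
        refine congrArg _ (sum_congr rfl fun m _ => ?_)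
        rw [show 2 * (J + 1) - 2 * m - 1 = 2 * J + 1 - 2 * m by omega]
        simp only [g]
        push_cast
        rfl

/-- For every positive integer `j`,
`Σ_{k=2}^{∞} 1/(k^j (k-1)^j) = 2 (-1)^j Σ_{m=0}^{⌊j/2⌋} C(2j-2m-1, j-1) ζ(2m)`,
where `ζ` is the Riemann zeta function (so `ζ(0) = -1/2`). -/
theorem stmt_1 (j : ℕ) (hj : 1 ≤ j) :
    ((∑' k : ℕ, 1 / (((k : ℝ) + 2) ^ j * ((k : ℝ) + 1) ^ j) : ℝ) : ℂ)
      = 2 * (-1) ^ j * ∑ m ∈ Finset.range (j / 2 + 1),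
          ((2 * j - 2 * m - 1).choose (j - 1) : ℂ) * riemannZeta (2 * (m : ℂ)) := by
  obtain ⟨J, rfl⟩ : ∃ J, j = J + 1 := ⟨j - 1, by omega⟩
  rw [Complex.ofReal_tsum, Nat.add_sub_cancel, ← sum_choose_mul_zeta_eq,
    ← (hasSum_one_div_nat_add_two_pow_mul_nat_add_one_pow J).tsum_eq]
  push_cast
  rfl
end

section
/- Fix an integer n ≥ 2 and let τ_2, ..., τ_n be independent random variables, where τ_k is exponentially distributed with rate λ_k = k(k-1)/2. Then T_n := Σ_{k=2}^{n} τ_k has distribution function P(T_n ≤ t) = 1 - Σ_{k=2}^{n} a_{nk} e^{-λ_k t} for all t ≥ 0, where a_{nk} := (-1)^k (2k-1) n!(n-1)! / ((n-k)!(n+k-1)!). -/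
/-!
Sums of independent exponential variables with pairwise distinct rates `λ_i` are hypoexponential:
convolving with one exponential density at a time shows by induction that
`P(∑ τ_i ≤ t) = 1 - ∑_i c_i e^{-λ_i t}` with `c_i = ∏_{j ≠ i} λ_j / (λ_j - λ_i)`. In the induction
step the coefficient of the new exponential is forced by the partial fraction identity
`∑_i c_i = 1`, which is Lagrange interpolation of the constant `1` evaluated at `0`.
For Kingman's rates `λ_j - λ_k = (j - k)(j + k - 1)/2`, so `c_k` is a ratio of factorials, `a_{nk}`.
-/

open MeasureTheory ProbabilityTheory Finset Real
open scoped Nat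

section Hypoexponential

variable {ι : Type*} [DecidableEq ι] (rate : ι → ℝ)

noncomputable def hypoexpCoeff (s : Finset ι) (i : ι) : ℝ :=
  ∏ j ∈ s.erase i, rate j / (rate j - rate i)

noncomputable def hypoexpCDF (s : Finset ι) (t : ℝ) : ℝ :=
  if 0 ≤ t then 1 - ∑ i ∈ s, hypoexpCoeff rate s i * exp (-(rate i * t)) else 0

variable {rate}

lemma hypoexpCDF_of_neg (s : Finset ι) {t : ℝ} (ht : t < 0) : hypoexpCDF rate s t = 0 :=
  if_neg (not_le.2 ht)

lemma hypoexpCoeff_insert_of_mem {s : Finset ι} {a i : ι} (ha : a ∉ s) (hi : i ∈ s) :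
    hypoexpCoeff rate (insert a s) i = hypoexpCoeff rate s i * (rate a / (rate a - rate i)) := by
  have hai : a ≠ i := fun h => ha (h ▸ hi)
  rw [hypoexpCoeff, erase_insert_of_ne hai, prod_insert (fun h => ha (mem_of_mem_erase h)),
    mul_comm, hypoexpCoeff]

lemma sum_hypoexpCoeff {s : Finset ι} (hinj : Set.InjOn rate s) (hs : s.Nonempty) :
    ∑ i ∈ s, hypoexpCoeff rate s i = 1 := by
  have h := congrArg (Polynomial.eval 0) (Lagrange.sum_basis hinj hs)
  rw [Polynomial.eval_finsetSum, Polynomial.eval_one] at h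
  rw [← h]
  refine sum_congr rfl fun i _ => ?_
  rw [Lagrange.basis, Polynomial.eval_prod, hypoexpCoeff]
  refine prod_congr rfl fun j _ => ?_
  simp only [Lagrange.basisDivisor, Polynomial.eval_mul, Polynomial.eval_C, Polynomial.eval_sub,
    Polynomial.eval_X, zero_sub]
  rw [← neg_div_neg_eq, neg_sub, div_eq_inv_mul]

lemma hypoexpCDF_comp_embedding {κ : Type*} [DecidableEq κ] (rate : κ → ℝ) (e : ι ↪ κ)
    (s : Finset ι) (t : ℝ) : hypoexpCDF (rate ∘ e) s t = hypoexpCDF rate (s.map e) t := by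
  have hcoeff : ∀ i, hypoexpCoeff (rate ∘ e) s i = hypoexpCoeff rate (s.map e) (e i) := by
    intro i
    rw [hypoexpCoeff, hypoexpCoeff, ← map_erase, prod_map]
    rfl
  simp only [hypoexpCDF, sum_map, hcoeff, Function.comp_apply]

end Hypoexponential

lemma integral_mul_exp_neg_mul (r t : ℝ) :
    ∫ x in (0 : ℝ)..t, r * exp (-(r * x)) = 1 - exp (-(r * t)) := by
  rw [intervalIntegral.integral_eq_sub_of_hasDerivAt (f := fun x => -exp (-(r * x)))
    (fun x _ => hasDerivAt_neg_exp_mul_exp) (Continuous.intervalIntegrable (by fun_prop) 0 t)]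
  simp only [mul_zero, neg_zero, exp_zero]
  ring

lemma integral_mul_exp_neg_mul_mul_exp {r l : ℝ} (hrl : l ≠ r) (t : ℝ) :
    ∫ x in (0 : ℝ)..t, r * exp (-(r * x)) * exp (-(l * (t - x)))
      = r / (r - l) * (exp (-(l * t)) - exp (-(r * t))) := by
  have hlr : l - r ≠ 0 := sub_ne_zero.mpr hrl
  have hfactor : ∀ x, r * exp (-(r * x)) * exp (-(l * (t - x)))
      = r * exp (-(l * t)) * exp ((l - r) * x) := by
    intro x
    rw [mul_assoc, mul_assoc, ← exp_add, ← exp_add]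
    ring_nf
  simp_rw [hfactor]
  rw [intervalIntegral.integral_const_mul, intervalIntegral.integral_comp_mul_left exp hlr,
    integral_exp, smul_eq_mul, mul_zero, exp_zero]
  have hexp : exp (-(l * t)) * exp ((l - r) * t) = exp (-(r * t)) := by
    rw [← exp_add]
    ring_nf
  rw [← hexp]
  field_simp
  ring

lemma exponentialPDFReal_eq (r x : ℝ) :
    exponentialPDFReal r x = if 0 ≤ x then r * exp (-(r * x)) else 0 := by
  simp only [exponentialPDFReal, gammaPDFReal, rpow_one, Gamma_one, div_one, sub_self, rpow_zero,
    mul_one]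

lemma integral_exponentialPDFReal_mul_of_nonneg (r : ℝ) {G : ℝ → ℝ} (hG : ∀ u < 0, G u = 0)
    {t : ℝ} (ht : 0 ≤ t) :
    ∫ x, exponentialPDFReal r x * G (t - x)
      = ∫ x in (0 : ℝ)..t, r * exp (-(r * x)) * G (t - x) := by
  have hind : (fun x => exponentialPDFReal r x * G (t - x))
      = (Set.Icc 0 t).indicator (fun x => r * exp (-(r * x)) * G (t - x)) := by
    funext x
    by_cases hx : x ∈ Set.Icc 0 t
    · rw [Set.indicator_of_mem hx, exponentialPDFReal_eq, if_pos hx.1]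
    · rw [Set.indicator_of_notMem hx, exponentialPDFReal_eq]
      rcases not_and_or.1 hx with hx | hx
      · rw [if_neg hx, zero_mul]
      · rw [hG _ (by linarith [not_le.1 hx]), mul_zero]
  rw [hind, integral_indicator measurableSet_Icc, integral_Icc_eq_integral_Ioc,
    intervalIntegral.integral_of_le ht]

lemma integral_mul_exp_neg_mul_hypoexpCDF {ι : Type*} [DecidableEq ι] {rate : ι → ℝ}
    {s : Finset ι} {a : ι} (ha : a ∉ s) (hne : ∀ i ∈ s, rate i ≠ rate a) {t : ℝ} (ht : 0 ≤ t) :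
    ∫ x in (0 : ℝ)..t, rate a * exp (-(rate a * x)) * hypoexpCDF rate s (t - x)
      = 1 - exp (-(rate a * t)) - ∑ i ∈ s, hypoexpCoeff rate (insert a s) i *
          (exp (-(rate i * t)) - exp (-(rate a * t))) := by
  set r := rate a
  have hexpand : Set.EqOn (fun x => r * exp (-(r * x)) * hypoexpCDF rate s (t - x))
      (fun x => r * exp (-(r * x)) - ∑ i ∈ s, hypoexpCoeff rate s i *
        (r * exp (-(r * x)) * exp (-(rate i * (t - x))))) (Set.uIcc 0 t) := by
    intro x hx
    rw [Set.uIcc_of_le ht] at hx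
    simp only [hypoexpCDF, if_pos (sub_nonneg.2 hx.2), mul_sub, mul_one, mul_sum]
    congr 1
    exact sum_congr rfl fun i _ => by ring
  rw [intervalIntegral.integral_congr hexpand,
    intervalIntegral.integral_sub (Continuous.intervalIntegrable (by fun_prop) 0 t)
      (Continuous.intervalIntegrable (by fun_prop) 0 t),
    intervalIntegral.integral_finsetSum
      fun i _ => Continuous.intervalIntegrable (by fun_prop) 0 t,
    integral_mul_exp_neg_mul]
  refine congrArg _ (sum_congr rfl fun i hi => ?_)
  rw [intervalIntegral.integral_const_mul, integral_mul_exp_neg_mul_mul_exp (hne i hi),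
    hypoexpCoeff_insert_of_mem ha hi, mul_assoc]

lemma integral_exponentialPDFReal_mul_hypoexpCDF {ι : Type*} [DecidableEq ι] {rate : ι → ℝ}
    {s : Finset ι} {a : ι} (ha : a ∉ s) (hinj : Set.InjOn rate ↑(insert a s)) (t : ℝ) :
    ∫ x, exponentialPDFReal (rate a) x * hypoexpCDF rate s (t - x)
      = hypoexpCDF rate (insert a s) t := by
  by_cases ht : 0 ≤ t
  swap
  · have hzero : ∀ x, exponentialPDFReal (rate a) x * hypoexpCDF rate s (t - x) = 0 := by
      intro x
      by_cases hx : 0 ≤ x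
      · rw [hypoexpCDF_of_neg s (by linarith), mul_zero]
      · rw [exponentialPDFReal_eq, if_neg hx, zero_mul]
    rw [integral_congr_ae (Filter.Eventually.of_forall hzero), integral_zero,
      hypoexpCDF_of_neg _ (not_le.1 ht)]
  have hne : ∀ i ∈ s, rate i ≠ rate a := fun i hi h =>
    ha (hinj (mem_insert_of_mem hi) (mem_insert_self a s) h ▸ hi)
  have hsum := sum_hypoexpCoeff hinj (insert_nonempty a s)
  rw [sum_insert ha] at hsum
  rw [integral_exponentialPDFReal_mul_of_nonneg _ (fun _ => hypoexpCDF_of_neg s) ht,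
    integral_mul_exp_neg_mul_hypoexpCDF ha hne ht, hypoexpCDF, if_pos ht, sum_insert ha]
  simp only [mul_sub, sum_sub_distrib, ← sum_mul]
  linear_combination exp (-(rate a * t)) * hsum

lemma measure_add_le_eq_lintegral {Ω : Type*} [MeasurableSpace Ω] {μ : Measure Ω}
    [IsFiniteMeasure μ] {X S : Ω → ℝ} (hX : Measurable X) (hS : Measurable S)
    (hXS : IndepFun X S μ) (t : ℝ) :
    μ {ω | X ω + S ω ≤ t} = ∫⁻ x, μ {ω | S ω ≤ t - x} ∂(μ.map X) := by
  have hset : MeasurableSet {p : ℝ × ℝ | p.1 + p.2 ≤ t} :=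
    measurableSet_le (measurable_fst.add measurable_snd) measurable_const
  have hslice : ∀ x, Prod.mk x ⁻¹' {p : ℝ × ℝ | p.1 + p.2 ≤ t} = Set.Iic (t - x) := by
    intro x
    ext y
    simp only [Set.mem_preimage, Set.mem_ofPred_eq, Set.mem_Iic]
    constructor <;> intro h <;> linarith
  calc μ {ω | X ω + S ω ≤ t}
      = μ.map (fun ω => (X ω, S ω)) {p : ℝ × ℝ | p.1 + p.2 ≤ t} :=
        (Measure.map_apply (hX.prodMk hS) hset).symm
    _ = ((μ.map X).prod (μ.map S)) {p : ℝ × ℝ | p.1 + p.2 ≤ t} := by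
        rw [(indepFun_iff_map_prod_eq_prod_map_map hX.aemeasurable hS.aemeasurable).1 hXS]
    _ = ∫⁻ x, μ {ω | S ω ≤ t - x} ∂(μ.map X) := by
        simp only [Measure.prod_apply hset, hslice, Measure.map_apply hS measurableSet_Iic]
        rfl

lemma integrable_exponentialPDFReal {r : ℝ} (hr : 0 < r) : Integrable (exponentialPDFReal r) := by
  refine ⟨(stronglyMeasurable_exponentialPDFReal r).aestronglyMeasurable, ?_⟩
  rw [hasFiniteIntegral_iff_ofReal (Filter.Eventually.of_forall (exponentialPDFReal_nonneg hr))]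
  exact (lintegral_exponentialPDF_eq_one hr).trans_lt ENNReal.one_lt_top

lemma measureReal_add_le_eq_integral {Ω : Type*} [MeasurableSpace Ω] {μ : Measure Ω}
    [IsFiniteMeasure μ] {X S : Ω → ℝ} (hX : Measurable X) (hS : Measurable S)
    (hXS : IndepFun X S μ) {r : ℝ} (hr : 0 < r) (hXd : μ.map X = expMeasure r) (t : ℝ) :
    μ.real {ω | X ω + S ω ≤ t} = ∫ x, exponentialPDFReal r x * μ.real {ω | S ω ≤ t - x} := by
  set F : ℝ → ℝ := fun x => μ.real {ω | S ω ≤ t - x}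
  have hF : Measurable F := Antitone.measurable fun x y hxy =>
    measureReal_mono (fun ω (h : S ω ≤ t - y) => show S ω ≤ t - x by linarith)
  have hint : Integrable (fun x => exponentialPDFReal r x * F x) :=
    (integrable_exponentialPDFReal hr).mul_bdd hF.aestronglyMeasurable
      (c := μ.real Set.univ) (Filter.Eventually.of_forall fun x => by
        rw [Real.norm_eq_abs, abs_of_nonneg measureReal_nonneg]
        exact measureReal_mono (Set.subset_univ _))
  have hlintegral :
      μ {ω | X ω + S ω ≤ t} = ∫⁻ x, ENNReal.ofReal (exponentialPDFReal r x * F x) := by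
    have hXd' : μ.map X = volume.withDensity (exponentialPDF r) := hXd
    have hFμ : ∀ x, μ {ω | S ω ≤ t - x} = ENNReal.ofReal (F x) := fun x => by
      rw [ofReal_measureReal]
    simp only [measure_add_le_eq_lintegral hX hS hXS, hXd', hFμ]
    rw [lintegral_withDensity_eq_lintegral_mul _ (f := exponentialPDF r)
      (measurable_exponentialPDFReal r).ennreal_ofReal hF.ennreal_ofReal]
    simp only [Pi.mul_apply, exponentialPDF, ENNReal.ofReal_mul (exponentialPDFReal_nonneg hr _)]
  rw [measureReal_def, hlintegral, ← ofReal_integral_eq_lintegral_ofReal hint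
    (Filter.Eventually.of_forall fun x => mul_nonneg (exponentialPDFReal_nonneg hr x)
      measureReal_nonneg), ENNReal.toReal_ofReal (integral_nonneg fun x =>
      mul_nonneg (exponentialPDFReal_nonneg hr x) measureReal_nonneg)]

theorem measureReal_sum_le_eq_hypoexpCDF {Ω ι : Type*} [MeasurableSpace Ω] {μ : Measure Ω}
    [IsProbabilityMeasure μ] [DecidableEq ι] {τ : ι → Ω → ℝ} {rate : ι → ℝ}
    (hτ : ∀ i, Measurable (τ i)) (hind : iIndepFun τ μ)
    (hlaw : ∀ i, μ.map (τ i) = expMeasure (rate i)) (hpos : ∀ i, 0 < rate i)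
    (s : Finset ι) (hinj : Set.InjOn rate s) (t : ℝ) :
    μ.real {ω | ∑ i ∈ s, τ i ω ≤ t} = hypoexpCDF rate s t := by
  induction s using Finset.induction_on generalizing t with
  | empty =>
    by_cases ht : 0 ≤ t <;> simp [hypoexpCDF, ht]
  | insert a s ha ih =>
    have hindep : IndepFun (τ a) (fun ω => ∑ i ∈ s, τ i ω) μ := by
      rw [← Finset.sum_fn]
      exact (hind.indepFun_finsetSum_of_notMem hτ ha).symm
    simp only [sum_insert ha]
    rw [measureReal_add_le_eq_integral (hτ a) (s.measurable_sum fun i _ => hτ i) hindep (hpos a)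
      (hlaw a), ← integral_exponentialPDFReal_mul_hypoexpCDF ha hinj t]
    simp only [ih (hinj.mono (by simp)) _]

noncomputable def kingmanRate (k : ℕ) : ℝ := k * (k - 1) / 2

lemma kingmanRate_add_two (m : ℕ) : kingmanRate (m + 2) = ((m : ℝ) + 2) * ((m : ℝ) + 1) / 2 := by
  rw [kingmanRate]
  push_cast
  ring

lemma kingmanRate_pos {k : ℕ} (hk : 2 ≤ k) : 0 < kingmanRate k := by
  have hk' : (2 : ℝ) ≤ k := by exact_mod_cast hk
  rw [kingmanRate]
  nlinarith

lemma kingmanRate_strictMonoOn : StrictMonoOn kingmanRate (Set.Ici 1) := by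
  intro a ha b _ hab
  have ha' : (1 : ℝ) ≤ a := by exact_mod_cast ha
  have hab' : (a : ℝ) < b := by exact_mod_cast hab
  rw [kingmanRate, kingmanRate]
  nlinarith

lemma kingmanRate_div_sub (m k : ℕ) :
    kingmanRate m / (kingmanRate m - kingmanRate k) = m * (m - 1) / ((m - k) * (m + k - 1)) := by
  rw [kingmanRate, kingmanRate, show (m : ℝ) * (m - 1) / 2 - k * (k - 1) / 2
    = (m - k) * (m + k - 1) / 2 by ring, div_div_div_cancel_right₀ two_ne_zero]

lemma prod_range_add_add_one_eq_factorial_div (a N : ℕ) :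
    ∏ i ∈ range N, ((a : ℝ) + i + 1) = (a + N)! / a ! := by
  rw [eq_div_iff (by positivity), mul_comm, ← Nat.factorial_mul_ascFactorial,
    Nat.ascFactorial_eq_prod_range]
  push_cast
  ring_nf

lemma prod_range_sub_eq_neg_one_pow_mul_factorial (p : ℕ) :
    ∏ i ∈ range p, ((i : ℝ) - p) = (-1) ^ p * p ! := by
  calc ∏ i ∈ range p, ((i : ℝ) - p) = ∏ j ∈ range p, (-1 * ((j : ℝ) + 1)) := by
        rw [← prod_range_reflect]
        refine prod_congr rfl fun j hj => ?_
        rw [mem_range] at hj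
        rw [Nat.cast_sub (by omega), Nat.cast_sub (by omega)]
        ring
    _ = (-1) ^ p * p ! := by
        rw [prod_mul_distrib, prod_const, card_range, ← prod_range_add_one_eq_factorial p]
        push_cast
        rfl

lemma prod_erase_Icc_eq_prod_range_mul_prod_range {M : Type*} [CommMonoid M] (f : ℕ → M)
    (a p q : ℕ) :
    ∏ m ∈ (Icc a (a + p + q)).erase (a + p), f m
      = (∏ i ∈ range p, f (a + i)) * ∏ i ∈ range q, f (a + p + 1 + i) := by
  have hsplit : (Icc a (a + p + q)).erase (a + p)
      = (range p).map (addLeftEmbedding a) ∪ (range q).map (addLeftEmbedding (a + p + 1)) := by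
    ext m
    simp only [mem_erase, mem_Icc, mem_union, mem_map, mem_range, addLeftEmbedding_apply]
    constructor
    · intro h
      rcases lt_or_gt_of_ne h.1 with hm | hm
      · exact Or.inl ⟨m - a, by omega, by omega⟩
      · exact Or.inr ⟨m - (a + p + 1), by omega, by omega⟩
    · rintro (⟨i, hi, rfl⟩ | ⟨i, hi, rfl⟩) <;> omega
  have hdisj : Disjoint ((range p).map (addLeftEmbedding a))
      ((range q).map (addLeftEmbedding (a + p + 1))) := by
    simp only [disjoint_left, mem_map, mem_range, addLeftEmbedding_apply]
    rintro _ ⟨i, hi, rfl⟩ ⟨j, hj, h⟩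
    omega
  rw [hsplit, prod_union hdisj, prod_map, prod_map]
  rfl

lemma hypoexpCoeff_kingmanRate {n k : ℕ} (hk : 2 ≤ k) (hkn : k ≤ n) :
    hypoexpCoeff kingmanRate (Icc 2 n) k
      = (-1) ^ k * (2 * k - 1) * n ! * (n - 1)! / ((n - k)! * (n + k - 1)!) := by
  obtain ⟨p, rfl⟩ : ∃ p, k = 2 + p := ⟨k - 2, by omega⟩
  obtain ⟨q, rfl⟩ : ∃ q, n = 2 + p + q := ⟨n - (2 + p), by omega⟩
  have hbelow : ∏ i ∈ range p, kingmanRate (2 + i) / (kingmanRate (2 + i) - kingmanRate (2 + p))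
      = (∏ i ∈ range p, (((1 : ℕ) : ℝ) + i + 1)) * (∏ i ∈ range p, (((0 : ℕ) : ℝ) + i + 1))
        / ((∏ i ∈ range p, ((i : ℝ) - p)) * ∏ i ∈ range p, (((p + 2 : ℕ) : ℝ) + i + 1)) := by
    rw [← prod_mul_distrib, ← prod_mul_distrib, ← prod_div_distrib]
    refine prod_congr rfl fun i _ => ?_
    rw [kingmanRate_div_sub]
    push_cast
    ring
  have habove : ∏ i ∈ range q,
        kingmanRate (2 + p + 1 + i) / (kingmanRate (2 + p + 1 + i) - kingmanRate (2 + p))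
      = (∏ i ∈ range q, (((p + 2 : ℕ) : ℝ) + i + 1)) * (∏ i ∈ range q, (((p + 1 : ℕ) : ℝ) + i + 1))
        / ((∏ i ∈ range q, (((0 : ℕ) : ℝ) + i + 1))
          * ∏ i ∈ range q, (((2 * p + 3 : ℕ) : ℝ) + i + 1)) := by
    rw [← prod_mul_distrib, ← prod_mul_distrib, ← prod_div_distrib]
    refine prod_congr rfl fun i _ => ?_
    rw [kingmanRate_div_sub]
    push_cast
    ring
  rw [hypoexpCoeff, prod_erase_Icc_eq_prod_range_mul_prod_range, hbelow, habove,
    prod_range_sub_eq_neg_one_pow_mul_factorial]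
  simp only [prod_range_add_add_one_eq_factorial_div]
  rw [show 2 + p + q - (2 + p) = q by omega,
    show 2 + p + q + (2 + p) - 1 = 2 * p + 3 + q by omega, show p + 2 + p = 2 * p + 2 by omega,
    show p + 1 + q = p + q + 1 by omega, show p + 2 + q = p + q + 1 + 1 by omega,
    show 2 + p + q = p + q + 1 + 1 by omega, show 1 + p = p + 1 by omega]
  simp only [zero_add, Nat.factorial_succ (p + q + 1), Nat.factorial_succ (p + 1),
    Nat.factorial_succ p, Nat.factorial_succ (2 * p + 2), Nat.factorial_zero]
  push_cast
  field_simp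
  have hsign : (-1 : ℝ) ^ p * (-1) ^ (2 + p) = 1 := by
    rw [← pow_add]
    exact Even.neg_one_pow ⟨p + 1, by omega⟩
  rw [Nat.factorial_one, Nat.cast_one]
  linear_combination (-(2 * (p : ℝ) + 3)) * hsign

lemma map_univ_addRightEmbedding_two (n : ℕ) :
    (univ : Finset (Fin (n - 1))).map (Fin.valEmbedding.trans (addRightEmbedding 2)) = Icc 2 n := by
  ext k
  simp only [mem_map, mem_univ, true_and, mem_Icc, Function.Embedding.trans_apply,
    Fin.valEmbedding_apply, addRightEmbedding_apply]
  constructor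
  · rintro ⟨i, rfl⟩
    omega
  · exact fun hk => ⟨⟨k - 2, by omega⟩, by simp only; omega⟩

theorem stmt_8_general {Ω : Type*} [MeasureSpace Ω] [IsProbabilityMeasure (ℙ : Measure Ω)]
    (n : ℕ)
    (τ : Fin (n - 1) → Ω → ℝ) (hmeas : ∀ i, Measurable (τ i))
    (hind : iIndepFun τ ℙ)
    (hdist : ∀ i : Fin (n - 1), Measure.map (τ i) ℙ
      = expMeasure ((((i : ℕ) : ℝ) + 2) * (((i : ℕ) : ℝ) + 1) / 2)) :
    ∀ t : ℝ, 0 ≤ t →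
      (ℙ {ω | ∑ i, τ i ω ≤ t}).toReal
        = 1 - ∑ k ∈ Finset.Icc 2 n,
            ((-1 : ℝ) ^ k * (2 * (k : ℝ) - 1) * (n.factorial : ℝ) * ((n - 1).factorial : ℝ) /
                (((n - k).factorial : ℝ) * ((n + k - 1).factorial : ℝ))) *
              Real.exp (-((k : ℝ) * ((k : ℝ) - 1) / 2) * t) := by
  intro t ht
  set e : Fin (n - 1) ↪ ℕ := Fin.valEmbedding.trans (addRightEmbedding 2)
  have he : ∀ i, e i = i + 2 := fun _ => rfl
  have hlaw : ∀ i, Measure.map (τ i) ℙ = expMeasure ((kingmanRate ∘ e) i) := fun i => by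
    rw [hdist, Function.comp_apply, he, kingmanRate_add_two]
  have hpos : ∀ i, 0 < (kingmanRate ∘ e) i := fun i => kingmanRate_pos (by simp [he])
  have hinj : Set.InjOn (kingmanRate ∘ e) ↑(univ : Finset (Fin (n - 1))) := fun i _ j _ h =>
    e.injective (kingmanRate_strictMonoOn.injOn (by simp [he]) (by simp [he]) h)
  rw [← measureReal_def, measureReal_sum_le_eq_hypoexpCDF hmeas hind hlaw hpos univ hinj t,
    hypoexpCDF_comp_embedding, map_univ_addRightEmbedding_two, hypoexpCDF, if_pos ht]
  refine congrArg _ (sum_congr rfl fun k hk => ?_)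
  rw [mem_Icc] at hk
  rw [hypoexpCoeff_kingmanRate hk.1 hk.2, kingmanRate, neg_mul]

/-- Fix `n ≥ 2` and let `τ_2, …, τ_n` be independent random variables, `τ_k`
exponential with rate `λ_k = k(k-1)/2` (here `τ i` for `i : Fin (n-1)` stands for
`τ_{i+2}`).  Then `T_n := Σ_{k=2}^n τ_k` has distribution function
`P(T_n ≤ t) = 1 - Σ_{k=2}^n a_{nk} e^{-λ_k t}` for `t ≥ 0`, where
`a_{nk} = (-1)^k (2k-1) n!(n-1)!/((n-k)!(n+k-1)!)`. -/
theorem stmt_8 {Ω : Type*} [MeasureSpace Ω] [IsProbabilityMeasure (ℙ : Measure Ω)]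
    (n : ℕ) (hn : 2 ≤ n)
    (τ : Fin (n - 1) → Ω → ℝ) (hmeas : ∀ i, Measurable (τ i))
    (hind : iIndepFun τ ℙ)
    (hdist : ∀ i : Fin (n - 1), Measure.map (τ i) ℙ
      = expMeasure ((((i : ℕ) : ℝ) + 2) * (((i : ℕ) : ℝ) + 1) / 2)) :
    ∀ t : ℝ, 0 ≤ t →
      (ℙ {ω | ∑ i, τ i ω ≤ t}).toReal
        = 1 - ∑ k ∈ Finset.Icc 2 n,
            ((-1 : ℝ) ^ k * (2 * (k : ℝ) - 1) * (n.factorial : ℝ) * ((n - 1).factorial : ℝ) /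
                (((n - k).factorial : ℝ) * ((n + k - 1).factorial : ℝ))) *
              Real.exp (-((k : ℝ) * ((k : ℝ) - 1) / 2) * t) :=
  stmt_8_general n τ hmeas hind hdist
end

section
/- Fix an integer n ≥ 2 and let X_2, ..., X_n be independent random variables, where X_k is exponentially distributed with rate (k-1)/2, and let L_n := Σ_{k=2}^{n} X_k. Then for every positive integer j, E[L_n^j] = j! 2^j Σ_{k=1}^{n-1} ((-1)^{k+1}/k^j) C(n-1, k). -/
/-!
Adding the exponentials one at a time, independence gives
`E[(S + Y)^j] = ∑ₖ C(j,k) E[S^k] E[Y^(j-k)]`, and `E[Y^r] = r! / λ^r` for `Y ~ Exp(λ)`.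
Writing `E[L^j] = j! 2^j a(j)`, adding the summand of rate `(t+1)/2` turns this into the
convolution `a'(j) = ∑ₖ a(k) / (t+1)^(j-k)`, i.e. `a'(j) = a(j) + a'(j-1) / (t+1)` with
`a'(0) = 1`. The alternating sums `∑ₗ (-1)^(l+1) C(t,l) / l^j` obey the same recursion, by Pascal's
rule and `l C(t+1,l) = (t+1) C(t,l-1)`, and equal `1` at `j = 0`.
-/

open MeasureTheory ProbabilityTheory Finset

namespace ProbabilityTheory

section Moments
open Real Set

lemma integral_pow_gammaMeasure {a r : ℝ} (ha : 0 < a) (hr : 0 < r) (k : ℕ) :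
    ∫ x, x ^ k ∂gammaMeasure a r = Gamma (a + k) / (Gamma a * r ^ k) := by
  have hpdf : ∀ x, (gammaPDF a r x).toReal • x ^ k = gammaPDFReal a r x * x ^ k := fun x => by
    rw [gammaPDF, ENNReal.toReal_ofReal (gammaPDFReal_nonneg ha hr x), smul_eq_mul]
  have hmeas : Measurable (gammaPDF a r) := (measurable_gammaPDFReal a r).ennreal_ofReal
  rw [gammaMeasure, integral_withDensity_eq_integral_toReal_smul
    hmeas (ae_of_all _ fun _ => ENNReal.ofReal_lt_top)]
  simp_rw [hpdf]
  rw [← setIntegral_eq_integral_of_forall_compl_eq_zero (s := Ici 0) fun x hx => by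
      simp [gammaPDFReal, (notMem_Ici.mp hx).not_ge], integral_Ici_eq_integral_Ioi,
    setIntegral_congr_fun measurableSet_Ioi (g := fun x =>
      r ^ a / Gamma a * (x ^ (a + k - 1) * exp (-(r * x)))) fun x (hx : 0 < x) => by
      dsimp only
      rw [gammaPDFReal, if_pos hx.le, add_sub_right_comm, rpow_add_natCast hx.ne']
      ring,
    integral_const_mul, integral_rpow_mul_exp_neg_mul_Ioi (by positivity) hr,
    div_rpow zero_le_one hr.le, one_rpow, rpow_add_natCast hr.ne']
  have hΓ := Gamma_pos_of_pos ha
  field_simp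

lemma integral_pow_expMeasure {r : ℝ} (hr : 0 < r) (k : ℕ) :
    ∫ x, x ^ k ∂expMeasure r = k.factorial / r ^ k := by
  rw [expMeasure, integral_pow_gammaMeasure one_pos hr, add_comm, Gamma_nat_eq_factorial,
    Gamma_one, one_mul]

end Moments

variable {Ω : Type*} {mΩ : MeasurableSpace Ω} {P : Measure Ω} {X Y : Ω → ℝ} {r : ℝ}

lemma HasLaw.integral_pow_of_expMeasure (hX : HasLaw X (expMeasure r) P) (hr : 0 < r) (k : ℕ) :
    ∫ ω, X ω ^ k ∂P = k.factorial / r ^ k :=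
  (hX.integral_comp (f := fun x => x ^ k) (by fun_prop)).trans (integral_pow_expMeasure hr k)

lemma HasLaw.integrable_pow_of_expMeasure (hX : HasLaw X (expMeasure r) P) (hr : 0 < r)
    (k : ℕ) : Integrable (fun ω => X ω ^ k) P :=
  -- a non-integrable function has Bochner integral `0`, and `k! / r^k ≠ 0`
  .of_integral_ne_zero <| by rw [hX.integral_pow_of_expMeasure hr]; positivity

lemma IndepFun.pow (h : IndepFun X Y P) (k l : ℕ) :
    IndepFun (fun ω => X ω ^ k) (fun ω => Y ω ^ l) P :=
  h.comp (measurable_id.pow_const k) (measurable_id.pow_const l)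

lemma IndepFun.integrable_pow_mul_pow (h : IndepFun X Y P) (k l : ℕ)
    (hX : Integrable (fun ω => X ω ^ k) P) (hY : Integrable (fun ω => Y ω ^ l) P) :
    Integrable (fun ω => X ω ^ k * Y ω ^ l) P :=
  (h.pow k l).integrable_mul hX hY

lemma IndepFun.integrable_add_pow (h : IndepFun X Y P)
    (hX : ∀ k : ℕ, Integrable (fun ω => X ω ^ k) P) (hY : ∀ k : ℕ, Integrable (fun ω => Y ω ^ k) P)
    (j : ℕ) : Integrable (fun ω => (X ω + Y ω) ^ j) P := by
  simp_rw [add_pow]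
  exact integrable_finsetSum _ fun k _ => (h.integrable_pow_mul_pow k _ (hX k) (hY _)).mul_const _

lemma IndepFun.integral_add_pow (h : IndepFun X Y P)
    (hX : ∀ k : ℕ, Integrable (fun ω => X ω ^ k) P) (hY : ∀ k : ℕ, Integrable (fun ω => Y ω ^ k) P)
    (j : ℕ) : ∫ ω, (X ω + Y ω) ^ j ∂P =
      ∑ k ∈ range (j + 1), (∫ ω, X ω ^ k ∂P) * (∫ ω, Y ω ^ (j - k) ∂P) * j.choose k := by
  simp_rw [add_pow]
  rw [integral_finsetSum _ fun k _ => (h.integrable_pow_mul_pow k _ (hX k) (hY _)).mul_const _]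
  refine sum_congr rfl fun k _ => ?_
  rw [integral_mul_const, (h.pow k _).integral_fun_mul_eq_mul_integral (hX k).1 (hY _).1]

end ProbabilityTheory

lemma Finset.sum_Icc_one_eq_sum_range {M : Type*} [AddCommMonoid M] (t : ℕ) (g : ℕ → M) :
    ∑ l ∈ Icc 1 t, g l = ∑ i ∈ range t, g (i + 1) := by
  rw [← Ico_add_one_right_eq_Icc, sum_Ico_eq_sum_range, Nat.add_sub_cancel]
  simp only [add_comm 1]

noncomputable def altChooseDivPowSum (t j : ℕ) : ℝ :=
  ∑ l ∈ Icc 1 t, (-1 : ℝ) ^ (l + 1) / (l : ℝ) ^ j * (t.choose l : ℝ)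

lemma altChooseDivPowSum_zero_right {t : ℕ} (ht : t ≠ 0) : altChooseDivPowSum t 0 = 1 := by
  have h : ∑ l ∈ range (t + 1), (-1 : ℝ) ^ l * (t.choose l : ℝ) = 0 := by
    exact_mod_cast Int.alternating_sum_range_choose_of_ne ht
  rw [sum_range_succ'] at h
  rw [altChooseDivPowSum, sum_Icc_one_eq_sum_range]
  simp only [pow_zero, div_one, mul_one, pow_succ, mul_neg_one, neg_mul, neg_neg,
    sum_neg_distrib, Nat.choose_zero_right, Nat.cast_one] at h ⊢
  linarith

lemma altChooseDivPowSum_succ (t j : ℕ) :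
    altChooseDivPowSum (t + 1) (j + 1) =
      altChooseDivPowSum t (j + 1) + altChooseDivPowSum (t + 1) j / (t + 1) := by
  simp only [altChooseDivPowSum, sum_Icc_one_eq_sum_range]
  have hext : ∑ i ∈ range t, (-1 : ℝ) ^ (i + 1 + 1) / ((i + 1 : ℕ) : ℝ) ^ (j + 1) *
      (t.choose (i + 1) : ℝ) = ∑ i ∈ range (t + 1), (-1 : ℝ) ^ (i + 1 + 1) /
        ((i + 1 : ℕ) : ℝ) ^ (j + 1) * (t.choose (i + 1) : ℝ) := by
    simp [sum_range_succ]
  rw [hext, sum_div, ← sum_add_distrib]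
  refine sum_congr rfl fun i _ => ?_
  have hsucc : ((t + 1).choose (i + 1) : ℝ) = t.choose i + t.choose (i + 1) := by
    exact_mod_cast Nat.choose_succ_succ' t i
  have hmul : ((t : ℝ) + 1) * t.choose i = (t + 1).choose (i + 1) * ((i : ℝ) + 1) := by
    exact_mod_cast Nat.add_one_mul_choose_eq t i
  have hc : (t.choose i : ℝ) = (t + 1).choose (i + 1) * ((i + 1 : ℕ) : ℝ) / (t + 1) := by
    rw [eq_div_iff (by positivity)]
    push_cast
    linear_combination hmul
  conv_lhs => rw [hsucc, hc]
  field_simp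
  ring

lemma altChooseDivPowSum_succ_eq_sum {t : ℕ} (ht : t ≠ 0) (j : ℕ) :
    altChooseDivPowSum (t + 1) j =
      ∑ k ∈ range (j + 1), altChooseDivPowSum t k / ((t : ℝ) + 1) ^ (j - k) := by
  induction j with
  | zero => simp [altChooseDivPowSum_zero_right ht, altChooseDivPowSum_zero_right t.succ_ne_zero]
  | succ j ih =>
    have hshift : ∑ k ∈ range (j + 1), altChooseDivPowSum t k / ((t : ℝ) + 1) ^ (j + 1 - k) =
        altChooseDivPowSum (t + 1) j / (t + 1) := by
      rw [ih, sum_div]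
      refine sum_congr rfl fun k hk => ?_
      rw [Nat.sub_add_comm (mem_range_succ_iff.mp hk), pow_succ, div_div]
    rw [sum_range_succ, hshift, Nat.sub_self, pow_zero, div_one, altChooseDivPowSum_succ,
      add_comm]

lemma integrable_and_integral_sum_pow_of_hasLaw_expMeasure {Ω : Type*} {mΩ : MeasurableSpace Ω}
    {P : Measure Ω} {m : ℕ} (hm : m ≠ 0) {X : Fin m → Ω → ℝ} (hind : iIndepFun X P)
    (hlaw : ∀ i : Fin m, HasLaw (X i) (expMeasure (((i : ℕ) + 1) / 2)) P) (j : ℕ) :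
    Integrable (fun ω => (∑ i, X i ω) ^ j) P ∧
      ∫ ω, (∑ i, X i ω) ^ j ∂P = j.factorial * 2 ^ j * altChooseDivPowSum m j := by
  have hrate (i : ℕ) : (0 : ℝ) < (i + 1) / 2 := by positivity
  induction m generalizing j with
  | zero => exact absurd rfl hm
  | succ m ih =>
    rcases eq_or_ne m 0 with rfl | hm₀
    · simp only [Fin.sum_univ_succ, Fin.sum_univ_zero, add_zero]
      refine ⟨(hlaw 0).integrable_pow_of_expMeasure (hrate 0) j, ?_⟩
      rw [(hlaw 0).integral_pow_of_expMeasure (hrate 0)]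
      simp [altChooseDivPowSum]
    set S : Ω → ℝ := fun ω => ∑ i : Fin m, X i.castSucc ω
    have hS := ih hm₀ (hind.precomp (Fin.castSucc_injective m))
      (fun i => by simpa using hlaw i.castSucc)
    have hY : HasLaw (X (Fin.last m)) (expMeasure ((m + 1) / 2)) P := by
      simpa using hlaw (Fin.last m)
    have hindep : IndepFun S (X (Fin.last m)) P := by
      have := hind.indepFun_finsetSum_of_notMem₀ (fun i => (hlaw i).aemeasurable)
        (s := univ.map Fin.castSuccEmb) (i := Fin.last m) (by simp)
      convert this using 1
      ext ω
      simp [S]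
    simp_rw [Fin.sum_univ_castSucc]
    refine ⟨hindep.integrable_add_pow (fun k => (hS k).1)
      (hY.integrable_pow_of_expMeasure (hrate m)) j, ?_⟩
    rw [hindep.integral_add_pow (fun k => (hS k).1) (hY.integrable_pow_of_expMeasure (hrate m)),
      altChooseDivPowSum_succ_eq_sum hm₀, mul_sum]
    refine sum_congr rfl fun k hk => ?_
    have hkj := mem_range_succ_iff.mp hk
    have hfac : (j.choose k : ℝ) * k.factorial * (j - k).factorial = j.factorial := by
      exact_mod_cast Nat.choose_mul_factorial_mul_factorial hkj
    rw [(hS k).2, hY.integral_pow_of_expMeasure (hrate m), ← hfac, ← pow_mul_pow_sub 2 hkj,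
      div_pow]
    field_simp

theorem stmt_10_general {Ω : Type*} [MeasureSpace Ω]
    (n : ℕ) (hn : 2 ≤ n)
    (X : Fin (n - 1) → Ω → ℝ) (hmeas : ∀ i, Measurable (X i))
    (hind : iIndepFun X ℙ)
    (hdist : ∀ i : Fin (n - 1), Measure.map (X i) ℙ
      = expMeasure ((((i : ℕ) : ℝ) + 1) / 2)) :
    ∀ j : ℕ, 1 ≤ j →
      (∫ ω, (∑ i, X i ω) ^ j ∂ℙ)
        = (j.factorial : ℝ) * 2 ^ j *
            ∑ k ∈ Finset.Icc 1 (n - 1),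
              ((-1 : ℝ) ^ (k + 1) / (k : ℝ) ^ j) * ((n - 1).choose k : ℝ) := fun j _ =>
  (integrable_and_integral_sum_pow_of_hasLaw_expMeasure (by omega) hind
    (fun i => ⟨(hmeas i).aemeasurable, hdist i⟩) j).2

/-- Fix `n ≥ 2` and let `X_2, …, X_n` be independent random variables, `X_k`
exponential with rate `(k-1)/2` (here `X i` for `i : Fin (n-1)` stands for
`X_{i+2}`), and let `L_n := Σ_{k=2}^n X_k`.  Then for every `j ≥ 1`,
`E[L_n^j] = j! 2^j Σ_{k=1}^{n-1} ((-1)^{k+1}/k^j) C(n-1, k)`. -/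
theorem stmt_10 {Ω : Type*} [MeasureSpace Ω] [IsProbabilityMeasure (ℙ : Measure Ω)]
    (n : ℕ) (hn : 2 ≤ n)
    (X : Fin (n - 1) → Ω → ℝ) (hmeas : ∀ i, Measurable (X i))
    (hind : iIndepFun X ℙ)
    (hdist : ∀ i : Fin (n - 1), Measure.map (X i) ℙ
      = expMeasure ((((i : ℕ) : ℝ) + 1) / 2)) :
    ∀ j : ℕ, 1 ≤ j →
      (∫ ω, (∑ i, X i ω) ^ j ∂ℙ)
        = (j.factorial : ℝ) * 2 ^ j *
            ∑ k ∈ Finset.Icc 1 (n - 1),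
              ((-1 : ℝ) ^ (k + 1) / (k : ℝ) ^ j) * ((n - 1).choose k : ℝ) :=
  stmt_10_general n hn X hmeas hind hdist
end

section
/- For every positive integer j and every integer n ≥ 2, Σ_{k=1}^{n-1} ((-1)^{k+1}/k^j) C(n-1, k) = Σ_{1 ≤ k_1 ≤ ... ≤ k_j ≤ n-1} 1/(k_1 ⋯ k_j), where the right-hand sum extends over all nondecreasing j-tuples of integers between 1 and n-1. -/
/-!
Both sides, as functions `a j m` of the exponent `j` and of `m = n - 1`, satisfy
`a 0 m = 1` for `m ≠ 0` and `a (j + 1) m = ∑_{k=1}^m a j k / k`. For the sum over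
nondecreasing tuples this comes from splitting off the last (largest) entry `k`. For the
alternating binomial sum, Pascal's rule `C(m+1, k) = C(m, k) + C(m, k-1)` together with
`k C(m+1, k) = (m+1) C(m, k-1)` gives `a (j+1) (m+1) - a (j+1) m = a j (m+1) / (m+1)`,
and `a 0 m = 1` is the vanishing of `∑ (-1)^k C(m, k)`.
-/

open Finset

section AlternatingSum

variable (K : Type*) [Field K]

def alternatingChooseSum (j m : ℕ) : K :=
  ∑ k ∈ Icc 1 m, (-1 : K) ^ (k + 1) / (k : K) ^ j * (m.choose k : K)

theorem alternatingChooseSum_zero {m : ℕ} (hm : m ≠ 0) : alternatingChooseSum K 0 m = 1 := by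
  have h := congrArg (Int.cast (R := K)) (Int.alternating_sum_range_choose_of_ne hm)
  push_cast at h
  rw [range_eq_Ico, sum_eq_sum_Ico_succ_bot (by omega), Ico_add_one_right_eq_Icc] at h
  simp only [pow_zero, Nat.choose_zero_right, Nat.cast_one, mul_one] at h
  simp only [alternatingChooseSum, pow_zero, div_one, pow_succ, mul_neg_one, neg_mul,
    sum_neg_distrib]
  linear_combination -h

variable [CharZero K]

theorem alternatingChooseSum_succ_succ (j m : ℕ) :
    alternatingChooseSum K (j + 1) (m + 1)
      = alternatingChooseSum K (j + 1) m + alternatingChooseSum K j (m + 1) / (m + 1) := by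
  have termwise : ∀ k ∈ Icc 1 (m + 1),
      (-1 : K) ^ (k + 1) / (k : K) ^ (j + 1) * ((m + 1).choose k : K)
        = (-1 : K) ^ (k + 1) / (k : K) ^ (j + 1) * (m.choose k : K)
          + (-1 : K) ^ (k + 1) / (k : K) ^ j * ((m + 1).choose k : K) / (m + 1) := by
    intro k hk
    obtain ⟨k, rfl⟩ : ∃ k', k = k' + 1 := ⟨k - 1, by grind⟩
    have absorb : ((m : K) + 1) * (m.choose k : K) = ((m + 1).choose (k + 1) : K) * (k + 1) := by
      exact_mod_cast Nat.add_one_mul_choose_eq m k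
    have pascal : ((m + 1).choose (k + 1) : K) = m.choose k + m.choose (k + 1) := by
      exact_mod_cast Nat.choose_succ_succ' m k
    push_cast
    field_simp
    linear_combination ((k : K) + 1) ^ j * (absorb + ((m : K) + 1) * pascal)
  rw [alternatingChooseSum, sum_congr rfl termwise, sum_add_distrib, ← sum_div,
    sum_Icc_succ_top (by omega), Nat.choose_succ_self, Nat.cast_zero, mul_zero, add_zero]
  rfl

theorem alternatingChooseSum_succ (j m : ℕ) :
    alternatingChooseSum K (j + 1) m = ∑ k ∈ Icc 1 m, alternatingChooseSum K j k / k := by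
  induction m with
  | zero => rfl
  | succ m ih =>
    rw [alternatingChooseSum_succ_succ, ih, sum_Icc_succ_top (by omega), Nat.cast_succ]

end AlternatingSum

theorem Monotone.finSnoc {α : Type*} [Preorder α] {j : ℕ} {g : Fin j → α} (hg : Monotone g)
    {a : α} (hga : ∀ i, g i ≤ a) : Monotone (Fin.snoc g a : Fin (j + 1) → α) := by
  intro x y hxy
  induction y using Fin.lastCases with
  | last =>
    induction x using Fin.lastCases with
    | last => exact le_rfl
    | cast x => simpa using hga x
  | cast y =>
    induction x using Fin.lastCases with
    | last => exact absurd hxy (Fin.castSucc_lt_last y).not_ge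
    | cast x => simpa using hg (Fin.castSucc_le_castSucc_iff.mp hxy)

abbrev MonotoneTuple (j m : ℕ) : Type := {f : Fin j → ℕ // Monotone f ∧ ∀ i, 1 ≤ f i ∧ f i ≤ m}

namespace MonotoneTuple

instance (j m : ℕ) : Finite (MonotoneTuple j m) :=
  Finite.of_injective (fun f i => (⟨f.1 i, Nat.lt_succ_of_le (f.2.2 i).2⟩ : Fin (m + 1)))
    fun _ _ h => Subtype.ext (funext fun i => congrArg Fin.val (congrFun h i))

noncomputable instance (j m : ℕ) : Fintype (MonotoneTuple j m) := Fintype.ofFinite _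

def snocEquiv (j m : ℕ) : (Σ k : Icc 1 m, MonotoneTuple j k) ≃ MonotoneTuple (j + 1) m where
  toFun x :=
    ⟨Fin.snoc x.2.1 x.1, x.2.2.1.finSnoc fun i => (x.2.2.2 i).2, by
      have hk := mem_Icc.mp x.1.2
      refine Fin.lastCases (by simpa using hk) fun i => ?_
      simpa using ⟨(x.2.2.2 i).1, (x.2.2.2 i).2.trans hk.2⟩⟩
  invFun f :=
    ⟨⟨f.1 (Fin.last j), mem_Icc.mpr (f.2.2 _)⟩, Fin.init f.1,
      fun _ _ hab => f.2.1 (Fin.castSucc_le_castSucc_iff.mpr hab),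
      fun _ => ⟨(f.2.2 _).1, f.2.1 (Fin.le_last _)⟩⟩
  left_inv _ := Sigma.subtype_ext (Subtype.ext (by simp)) (by simp)
  right_inv f := Subtype.ext (Fin.snoc_init_self f.1)

end MonotoneTuple

section MonotoneTupleSum

variable (K : Type*) [Field K]

noncomputable def monotoneTupleSum (j m : ℕ) : K :=
  ∑ f : MonotoneTuple j m, ∏ i, 1 / (f.1 i : K)

theorem monotoneTupleSum_zero (m : ℕ) : monotoneTupleSum K 0 m = 1 := by
  rw [monotoneTupleSum, Fintype.sum_subsingleton _ ⟨Fin.elim0, fun i => i.elim0, fun i => i.elim0⟩]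
  exact Fin.prod_univ_zero _

theorem monotoneTupleSum_succ (j m : ℕ) :
    monotoneTupleSum K (j + 1) m = ∑ k ∈ Icc 1 m, monotoneTupleSum K j k / k := by
  rw [monotoneTupleSum, ← (MonotoneTuple.snocEquiv j m).sum_comp, Fintype.sum_sigma,
    ← sum_coe_sort (Icc 1 m)]
  refine sum_congr rfl fun k _ => ?_
  rw [monotoneTupleSum, sum_div]
  refine sum_congr rfl fun g _ => ?_
  simp [MonotoneTuple.snocEquiv, Fin.prod_univ_castSucc, div_eq_mul_inv, mul_comm]

end MonotoneTupleSum

theorem alternatingChooseSum_eq_monotoneTupleSum (K : Type*) [Field K] [CharZero K] (j : ℕ)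
    {m : ℕ} (hm : m ≠ 0) : alternatingChooseSum K j m = monotoneTupleSum K j m := by
  induction j generalizing m with
  | zero => rw [alternatingChooseSum_zero K hm, monotoneTupleSum_zero]
  | succ j ih =>
    rw [alternatingChooseSum_succ, monotoneTupleSum_succ]
    exact sum_congr rfl fun k hk => by rw [ih (by grind)]

theorem stmt_12_general (j n : ℕ) (hn : 2 ≤ n) :
    ∑ k ∈ Finset.Icc 1 (n - 1), ((-1 : ℝ) ^ (k + 1) / (k : ℝ) ^ j) * ((n - 1).choose k : ℝ)
      = ∑' f : {f : Fin j → ℕ // Monotone f ∧ ∀ i, 1 ≤ f i ∧ f i ≤ n - 1},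
          ∏ i, 1 / (f.1 i : ℝ) := by
  rw [tsum_fintype]
  exact alternatingChooseSum_eq_monotoneTupleSum ℝ j (by omega)

/-- For every positive integer `j` and every integer `n ≥ 2`,
`Σ_{k=1}^{n-1} ((-1)^{k+1}/k^j) C(n-1, k) = Σ_{1 ≤ k_1 ≤ … ≤ k_j ≤ n-1} 1/(k_1 ⋯ k_j)`,
where the right-hand sum extends over all nondecreasing `j`-tuples of integers
between `1` and `n-1`. -/
theorem stmt_12 (j n : ℕ) (hj : 1 ≤ j) (hn : 2 ≤ n) :
    ∑ k ∈ Finset.Icc 1 (n - 1), ((-1 : ℝ) ^ (k + 1) / (k : ℝ) ^ j) * ((n - 1).choose k : ℝ)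
      = ∑' f : {f : Fin j → ℕ // Monotone f ∧ ∀ i, 1 ≤ f i ∧ f i ≤ n - 1},
          ∏ i, 1 / (f.1 i : ℝ) :=
  stmt_12_general j n hn
end

section
/- For every integer i ≥ 1 and all integers n_1, ..., n_{i+1} ≥ 2, the quantities s_i satisfy the recursion s_{i+1}(n_1, ..., n_{i+1}) = s_i(n_1, ..., n_i) · s_1(n_{i+1}) - Σ_{r=1}^{i} s_i(n_1, ..., n_{r-1}, n_r + n_{i+1}, n_{r+1}, ..., n_i), where s_1(m) = ζ(m). -/
/-!
Pair every injective tuple `(k_1, …, k_i)` with one more index `k`. Summing over all pairs gives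
`s_i(n_1, …, n_i) · ζ(n_{i+1})`. The pairs with `k` outside `{k_1, …, k_i}` are exactly the
injective `(i+1)`-tuples, and those with `k = k_r` (a unique `r`, by injectivity) sum to `s_i`
with exponent `n_r + n_{i+1}` in slot `r`. All terms are nonnegative and summable, so the
rearrangement is legitimate.
-/

/-- `s_i(n_1, …, n_i) = Σ_{k_1, …, k_i ≥ 1 pairwise distinct} 1/(k_1^{n_1} ⋯ k_i^{n_i})`. -/
noncomputable def distinctZetaSum (i : ℕ) (c : Fin i → ℕ) : ℝ :=
  ∑' k : {k : Fin i → ℕ // Function.Injective k ∧ ∀ t, 0 < k t},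
    ∏ t, 1 / ((k.1 t : ℝ)) ^ (c t)

open Function Finset

theorem prod_update_mul_self {ι M : Type*} [Fintype ι] [DecidableEq ι] [CommMonoid M]
    (x : ι → M) (r : ι) (y : M) : ∏ t, update x r (x r * y) t = (∏ t, x t) * y := by
  rw [prod_update_of_mem (mem_univ r), sdiff_singleton_eq_erase,
    ← mul_prod_erase univ x (mem_univ r), mul_right_comm]

section EmbeddingSum

variable {ι κ α : Type*} [Fintype ι]

theorem summable_prod_apply_of_nonneg {g : ι → α → ℝ} (hg0 : ∀ t a, 0 ≤ g t a)
    (hg : ∀ t, Summable (g t)) : Summable fun k : ι → α => ∏ t, g t (k t) := by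
  classical
  refine summable_of_sum_le (c := ∏ t, ∑' a, g t a)
    (fun k => prod_nonneg fun t _ => hg0 t (k t)) fun u => ?_
  calc ∑ k ∈ u, ∏ t, g t (k t)
      ≤ ∑ k ∈ Fintype.piFinset fun t => u.image (· t), ∏ t, g t (k t) :=
        sum_le_sum_of_subset_of_nonneg
          (fun k hk => Fintype.mem_piFinset.2 fun t => mem_image_of_mem _ hk)
          (fun k _ _ => prod_nonneg fun t _ => hg0 t (k t))
    _ = ∏ t, ∑ a ∈ u.image (· t), g t a := (prod_univ_sum _ _).symm
    _ ≤ ∏ t, ∑' a, g t a :=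
        prod_le_prod (fun t _ => sum_nonneg fun a _ => hg0 t a)
          (fun t _ => (hg t).sum_le_tsum _ fun a _ => hg0 t a)

noncomputable def embeddingSum (g : ι → α → ℝ) : ℝ :=
  ∑' e : ι ↪ α, ∏ t, g t (e t)

theorem summable_embedding_prod {g : ι → α → ℝ} (hg0 : ∀ t a, 0 ≤ g t a)
    (hg : ∀ t, Summable (g t)) : Summable fun e : ι ↪ α => ∏ t, g t (e t) :=
  (summable_prod_apply_of_nonneg hg0 hg).comp_injective DFunLike.coe_injective

theorem embeddingSum_equiv [Fintype κ] (σ : ι ≃ κ) (g : ι → α → ℝ) :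
    embeddingSum g = embeddingSum fun s => g (σ.symm s) := by
  rw [embeddingSum, ← (σ.embeddingCongr (Equiv.refl α)).symm.tsum_eq]
  refine tsum_congr fun e => ?_
  exact Fintype.prod_equiv σ _ _ fun t => by simp [Equiv.embeddingCongr]

theorem embeddingSum_of_unique [Unique ι] (g : ι → α → ℝ) :
    embeddingSum g = ∑' a, g default a := by
  rw [embeddingSum, ← Equiv.uniqueEmbeddingEquivResult.symm.tsum_eq]
  exact tsum_congr fun a => (Fintype.prod_unique _).trans rfl

theorem tsum_compl_range_embedding {h : α → ℝ} (hh : Summable h) (e : ι ↪ α) :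
    ∑' a : ↥(Set.range e)ᶜ, h a = ∑' a, h a - ∑ t, h (e t) := by
  rw [← (hh.subtype _).tsum_add_tsum_compl (hh.subtype _), tsum_range h e.injective,
    tsum_fintype fun t => h (e t)]
  ring

theorem embeddingSum_option [DecidableEq ι] {g : Option ι → α → ℝ}
    (hg0 : ∀ o a, 0 ≤ g o a) (hg : ∀ o, Summable (g o)) :
    embeddingSum g = embeddingSum (fun t => g (some t)) * ∑' a, g none a
      - ∑ r, embeddingSum (update (fun t => g (some t)) r fun a => g (some r) a * g none a) := by
  set G : (ι ↪ α) → ℝ := fun e => ∏ t, g (some t) (e t)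
  have hG : Summable G := summable_embedding_prod (fun t => hg0 (some t)) fun t => hg (some t)
  have hGh (r : ι) : Summable fun e : ι ↪ α => G e * g none (e r) :=
    (hG.mul_right (∑' a, g none a)).of_nonneg_of_le
      (fun e => mul_nonneg (prod_nonneg fun t _ => hg0 _ _) (hg0 _ _))
      fun e => mul_le_mul_of_nonneg_left ((hg none).le_tsum _ fun a _ => hg0 _ _)
        (prod_nonneg fun t _ => hg0 _ _)
  have hsplit (e : ι ↪ α) (a : ↥(Set.range e)ᶜ) :
      ∏ o, g o ((Embedding.optionEmbeddingEquiv ι α).symm ⟨e, a⟩ o) = G e * g none a := by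
    simp [G, Fintype.prod_option, mul_comm]
  have hmerge (e : ι ↪ α) (r : ι) :
      ∏ t, update (fun t => g (some t)) r (fun a => g (some r) a * g none a) t (e t)
        = G e * g none (e r) := by
    rw [← prod_update_mul_self (fun t => g (some t) (e t)) r]
    congr 1 with t
    rcases eq_or_ne t r with rfl | htr
    · simp
    · simp [htr]
  have hsum : Summable ((fun e : Option ι ↪ α => ∏ o, g o (e o)) ∘
      (Embedding.optionEmbeddingEquiv ι α).symm) :=
    (Embedding.optionEmbeddingEquiv ι α).symm.summable_iff.2 (summable_embedding_prod hg0 hg)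
  rw [embeddingSum, ← (Embedding.optionEmbeddingEquiv ι α).symm.tsum_eq]
  refine hsum.tsum_sigma.trans ?_
  simp_rw [comp_apply, hsplit, tsum_mul_left, tsum_compl_range_embedding (hg none), embeddingSum,
    hmerge, mul_sub, mul_sum]
  rw [Summable.tsum_sub (hG.mul_right _) (summable_sum fun r _ => hGh r), tsum_mul_right,
    Summable.tsum_finsetSum fun r _ => hGh r]

theorem embeddingSum_fin_succ {i : ℕ} {g : Fin (i + 1) → α → ℝ}
    (hg0 : ∀ t a, 0 ≤ g t a) (hg : ∀ t, Summable (g t)) :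
    embeddingSum g = embeddingSum (fun t : Fin i => g t.castSucc) * ∑' a, g (Fin.last i) a
      - ∑ r : Fin i, embeddingSum (update (fun t : Fin i => g t.castSucc) r
          fun a => g r.castSucc a * g (Fin.last i) a) := by
  rw [embeddingSum_equiv finSuccEquivLast, embeddingSum_option (fun o => hg0 _) fun o => hg _]
  simp

end EmbeddingSum

theorem distinctZetaSum_eq_embeddingSum {i : ℕ} {c : Fin i → ℕ} (hc : ∀ t, c t ≠ 0) :
    distinctZetaSum i c = embeddingSum fun t (a : ℕ) => 1 / (a : ℝ) ^ c t := by
  set F : (Fin i → ℕ) → ℝ := fun k => ∏ t, 1 / (k t : ℝ) ^ c t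
  -- a tuple with a zero entry contributes `1 / 0 ^ c t = 0`, so positivity may be dropped
  have hF : {k : Fin i → ℕ | ∀ t, 0 < k t}.indicator F = F := by
    refine Set.indicator_eq_self.2 fun k hk => ?_
    by_contra hpos
    obtain ⟨t, ht⟩ : ∃ t, k t = 0 := by simpa using hpos
    exact hk (prod_eq_zero (mem_univ t) (by simp [ht, hc t]))
  calc distinctZetaSum i c
      = ∑' k, ({k : Fin i → ℕ | Injective k} ∩ {k | ∀ t, 0 < k t}).indicator F k :=
        _root_.tsum_subtype _ F
    _ = ∑' k, {k : Fin i → ℕ | Injective k}.indicator F k := by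
        rw [← Set.indicator_indicator, hF]
    _ = ∑' k : {k : Fin i → ℕ // Injective k}, F k := (_root_.tsum_subtype _ F).symm
    _ = _ := (Equiv.subtypeInjectiveEquivEmbedding _ _).tsum_eq
        fun e : Fin i ↪ ℕ => ∏ t, 1 / ((e t : ℕ) : ℝ) ^ c t

theorem distinctZetaSum_update_add {i : ℕ} {c : Fin i → ℕ} (hc : ∀ t, c t ≠ 0) (r : Fin i)
    (m : ℕ) : distinctZetaSum i (update c r (c r + m))
      = embeddingSum (update (fun t (a : ℕ) => 1 / (a : ℝ) ^ c t) r
          fun a => 1 / (a : ℝ) ^ c r * (1 / (a : ℝ) ^ m)) := by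
  rw [distinctZetaSum_eq_embeddingSum
    ((forall_update_iff c fun _ k => k ≠ 0).2 ⟨by simp [hc r], fun t _ => hc t⟩)]
  congr 1 with t a
  rcases eq_or_ne t r with rfl | htr
  · simp [pow_add, mul_comm]
  · simp [htr]

theorem stmt_17_general (i : ℕ) (n : Fin (i + 1) → ℕ) (hn : ∀ t, 2 ≤ n t) :
    distinctZetaSum (i + 1) n
      = distinctZetaSum i (fun t => n t.castSucc)
          * distinctZetaSum 1 (fun _ => n (Fin.last i))
        - ∑ r : Fin i,
            distinctZetaSum i
              (Function.update (fun t => n t.castSucc) r (n r.castSucc + n (Fin.last i))) := by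
  have hn0 (t : Fin (i + 1)) : n t ≠ 0 := by linarith [hn t]
  simp_rw [distinctZetaSum_update_add (fun t => hn0 t.castSucc),
    distinctZetaSum_eq_embeddingSum hn0,
    distinctZetaSum_eq_embeddingSum (c := fun t => n t.castSucc) fun t => hn0 _,
    distinctZetaSum_eq_embeddingSum (c := fun _ => n (Fin.last i)) fun _ => hn0 _,
    embeddingSum_of_unique (ι := Fin 1)]
  exact embeddingSum_fin_succ (fun t a => by positivity)
    fun t => Real.summable_one_div_nat_pow.2 (hn t)

/-- For every `i ≥ 1` and all `n_1, …, n_{i+1} ≥ 2`, the quantities `s_i` satisfy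
`s_{i+1}(n_1, …, n_{i+1}) = s_i(n_1, …, n_i) s_1(n_{i+1})
   - Σ_{r=1}^i s_i(n_1, …, n_{r-1}, n_r + n_{i+1}, n_{r+1}, …, n_i)`,
where `s_1(m) = ζ(m)`. -/
theorem stmt_17 (i : ℕ) (hi : 1 ≤ i) (n : Fin (i + 1) → ℕ) (hn : ∀ t, 2 ≤ n t) :
    distinctZetaSum (i + 1) n
      = distinctZetaSum i (fun t => n t.castSucc)
          * distinctZetaSum 1 (fun _ => n (Fin.last i))
        - ∑ r : Fin i,
            distinctZetaSum i
              (Function.update (fun t => n t.castSucc) r (n r.castSucc + n (Fin.last i))) :=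
  stmt_17_general i n hn
end

section
/- Let n ≥ 1 and let d_1, ..., d_n be pairwise distinct real numbers. Let Q be the n × n matrix with entries q_{ii} = -d_i, q_{i,i-1} = d_i for i ≥ 2, and q_{ij} = 0 otherwise, and define the n × n matrices R = (r_{ij}) and L = (l_{ij}) by r_{ij} = l_{ij} = 0 for i < j, r_{ij} = Π_{l=j+1}^{i} d_l/(d_l - d_j) and l_{ij} = Π_{l=j}^{i-1} d_{l+1}/(d_l - d_i) for i ≥ j. Then for every t ∈ ℝ and all indices i, j, the (i, j) entry of the matrix exponential exp(tQ) equals Σ_{k=j}^{i} e^{-d_k t} r_{ik} l_{kj}. -/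
/-!
The columns of `R` are right and the rows of `L` left eigenvectors of `Q`: the product formulas
for `r_ij` and `l_ij` solve the two-term recurrences expressing `Q R = R D` and `L Q = D L`, where
`D = diag (-d)`. Hence `L R` commutes with `D`, whose entries are distinct, so `L R` is diagonal;
as a product of unit lower triangular matrices it is `1`. Thus `Q = R D L` and
`exp (t Q) = R exp (t D) L`, whose `(i, j)` entry is the claimed sum since `R` and `L` are lower
triangular.
-/

open Matrix Finset

namespace Matrix

variable {m R : Type*} [Fintype m]

theorem IsLowerTriangular.mul_apply_self [LinearOrder m] [NonUnitalNonAssocSemiring R]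
    {M N : Matrix m m R} (hM : M.IsLowerTriangular) (hN : N.IsLowerTriangular) (i : m) :
    (M * N) i i = M i i * N i i := by
  rw [mul_apply, Fintype.sum_eq_single i]
  intro k hk
  rcases hk.lt_or_gt with hki | hik
  · rw [hN hki, mul_zero]
  · rw [hM hik, zero_mul]

theorem IsLowerTriangular.mul_diagonal_mul_apply [DecidableEq m] [LinearOrder m]
    [LocallyFiniteOrder m] [NonUnitalNonAssocSemiring R] {A B : Matrix m m R}
    (hA : A.IsLowerTriangular) (hB : B.IsLowerTriangular) (f : m → R) (i j : m) :
    (A * diagonal f * B) i j = ∑ k ∈ Icc j i, A i k * f k * B k j := by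
  rw [mul_apply]
  simp only [mul_diagonal]
  refine (sum_subset (subset_univ _) fun k _ hk => ?_).symm
  rcases not_and_or.mp (mem_Icc.not.mp hk) with hjk | hki
  · rw [hB (not_le.mp hjk), mul_zero]
  · rw [hA (not_le.mp hki), zero_mul, zero_mul]

theorem eq_diagonal_diag_of_mul_diagonal_eq [DecidableEq m] [CommRing R] [NoZeroDivisors R]
    {M : Matrix m m R} {e : m → R} (he : Function.Injective e)
    (h : M * diagonal e = diagonal e * M) : M = diagonal M.diag := by
  ext i j
  rcases eq_or_ne i j with rfl | hij
  · simp
  have hentry := congrFun (congrFun h i) j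
  rw [mul_diagonal, diagonal_mul] at hentry
  have : (e i - e j) * M i j = 0 := by linear_combination -hentry
  rw [diagonal_apply_ne _ hij]
  exact (mul_eq_zero.mp this).resolve_left (sub_ne_zero.mpr (he.ne hij))

theorem exp_mul_diagonal_mul_of_mul_eq_one [DecidableEq m] {𝔸 : Type*} [NormedCommRing 𝔸]
    [NormedAlgebra ℚ 𝔸] [CompleteSpace 𝔸] {P P' : Matrix m m 𝔸} (h : P' * P = 1) (e : m → 𝔸) :
    NormedSpace.exp (P * diagonal e * P') =
      P * diagonal (fun k => NormedSpace.exp (e k)) * P' := by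
  let U : (Matrix m m 𝔸)ˣ := ⟨P, P', mul_eq_one_comm.mp h, h⟩
  have h := exp_units_conj U (diagonal e)
  rw [exp_diagonal, Pi.exp_def] at h
  exact h

end Matrix

namespace PureDeath

noncomputable section

variable {n : ℕ} (d : Fin (n + 1) → ℝ)

def generator : Matrix (Fin (n + 1)) (Fin (n + 1)) ℝ :=
  of fun i j => if i = j then -d i else if (i : ℕ) = (j : ℕ) + 1 then d i else 0

def rightEigenMatrix : Matrix (Fin (n + 1)) (Fin (n + 1)) ℝ :=
  of fun i j => if j ≤ i then ∏ l ∈ Ioc j i, d l / (d l - d j) else 0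

def leftEigenMatrix : Matrix (Fin (n + 1)) (Fin (n + 1)) ℝ :=
  of fun i j => if j ≤ i then ∏ l ∈ Ico j i, d (l + 1) / (d l - d i) else 0

theorem generator_mul_apply_succ (M : Matrix (Fin (n + 1)) (Fin (n + 1)) ℝ) (a : Fin n)
    (j : Fin (n + 1)) :
    (generator d * M) a.succ j = -d a.succ * M a.succ j + d a.succ * M a.castSucc j := by
  rw [mul_apply, Fintype.sum_eq_add a.succ a.castSucc a.castSucc_lt_succ.ne']
  · simp [generator, a.castSucc_lt_succ.ne']
  · rintro k ⟨hk, hk'⟩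
    have : (a : ℕ) ≠ k := fun h => hk' (Fin.ext h.symm)
    simp [generator, Ne.symm hk, this]

theorem mul_generator_apply_castSucc (M : Matrix (Fin (n + 1)) (Fin (n + 1)) ℝ) (i : Fin (n + 1))
    (a : Fin n) :
    (M * generator d) i a.castSucc = M i a.castSucc * -d a.castSucc + M i a.succ * d a.succ := by
  rw [mul_apply, Fintype.sum_eq_add a.castSucc a.succ a.castSucc_lt_succ.ne]
  · simp [generator, a.castSucc_lt_succ.ne']
  · rintro k ⟨hk, hk'⟩
    have : (k : ℕ) ≠ a + 1 := fun h => hk' (Fin.ext h)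
    simp [generator, hk, this]

theorem generator_isLowerTriangular : (generator d).IsLowerTriangular := fun i j hij => by
  have hij := OrderDual.toDual_lt_toDual.mp hij
  simp [generator, hij.ne, show (i : ℕ) ≠ j + 1 by have := Fin.lt_def.mp hij; omega]

theorem rightEigenMatrix_isLowerTriangular : (rightEigenMatrix d).IsLowerTriangular :=
  fun _ _ hij => if_neg (not_le.mpr (OrderDual.toDual_lt_toDual.mp hij))

theorem leftEigenMatrix_isLowerTriangular : (leftEigenMatrix d).IsLowerTriangular :=
  fun _ _ hij => if_neg (not_le.mpr (OrderDual.toDual_lt_toDual.mp hij))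

@[simp]
theorem rightEigenMatrix_self (i : Fin (n + 1)) : rightEigenMatrix d i i = 1 := by
  simp [rightEigenMatrix]

@[simp]
theorem leftEigenMatrix_self (i : Fin (n + 1)) : leftEigenMatrix d i i = 1 := by
  simp [leftEigenMatrix]

theorem rightEigenMatrix_succ (a : Fin n) {j : Fin (n + 1)} (hj : j ≤ a.castSucc) :
    rightEigenMatrix d a.succ j =
      d a.succ / (d a.succ - d j) * rightEigenMatrix d a.castSucc j := by
  have hIoc : Ioc j a.succ = insert a.succ (Ioc j a.castSucc) := by
    rw [← Fin.orderSucc_castSucc,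
      insert_Ioc_right_eq_Ioc_succ_of_not_isMax hj (not_isMax_of_lt a.castSucc_lt_succ)]
  simp only [rightEigenMatrix, of_apply, if_pos hj, if_pos (hj.trans a.castSucc_lt_succ.le), hIoc,
    prod_insert (by simp : a.succ ∉ Ioc j a.castSucc)]

theorem leftEigenMatrix_castSucc (a : Fin n) {i : Fin (n + 1)} (hi : a.succ ≤ i) :
    leftEigenMatrix d i a.castSucc =
      d a.succ / (d a.castSucc - d i) * leftEigenMatrix d i a.succ := by
  have hIco : Ico a.castSucc i = insert a.castSucc (Ico a.succ i) := by
    rw [← Fin.orderSucc_castSucc, insert_Ico_succ_left_eq_Ico (a.castSucc_lt_succ.trans_le hi)]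
  simp only [leftEigenMatrix, of_apply, if_pos hi, if_pos (a.castSucc_lt_succ.le.trans hi), hIco,
    prod_insert (by simp : a.castSucc ∉ Ico a.succ i), Fin.coeSucc_eq_succ]

variable {d}

theorem generator_mul_rightEigenMatrix (hd : Function.Injective d) :
    generator d * rightEigenMatrix d = rightEigenMatrix d * diagonal (-d) := by
  ext i j
  rcases lt_trichotomy i j with hij | rfl | hji
  · have hlow := (generator_isLowerTriangular d).mul (rightEigenMatrix_isLowerTriangular d)
    rw [hlow (OrderDual.toDual_lt_toDual.mpr hij), mul_diagonal,
      rightEigenMatrix_isLowerTriangular d (OrderDual.toDual_lt_toDual.mpr hij), zero_mul]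
  · rw [(generator_isLowerTriangular d).mul_apply_self (rightEigenMatrix_isLowerTriangular d),
      mul_diagonal]
    simp [generator]
  · obtain ⟨a, rfl⟩ := Fin.exists_succ_eq.mpr (j.zero_le.trans_lt hji).ne'
    have hj : j ≤ a.castSucc := Fin.le_castSucc_iff.mpr hji
    have hne : d a.succ - d j ≠ 0 := sub_ne_zero.mpr (hd.ne hji.ne')
    rw [generator_mul_apply_succ, mul_diagonal, Pi.neg_apply, rightEigenMatrix_succ d a hj]
    field_simp
    ring

theorem leftEigenMatrix_mul_generator (hd : Function.Injective d) :
    leftEigenMatrix d * generator d = diagonal (-d) * leftEigenMatrix d := by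
  ext i j
  rcases lt_trichotomy i j with hij | rfl | hji
  · have hlow := (leftEigenMatrix_isLowerTriangular d).mul (generator_isLowerTriangular d)
    rw [hlow (OrderDual.toDual_lt_toDual.mpr hij), diagonal_mul,
      leftEigenMatrix_isLowerTriangular d (OrderDual.toDual_lt_toDual.mpr hij), mul_zero]
  · rw [(leftEigenMatrix_isLowerTriangular d).mul_apply_self (generator_isLowerTriangular d),
      diagonal_mul]
    simp [generator]
  · obtain ⟨a, rfl⟩ := Fin.exists_castSucc_eq.mpr (hji.trans_le i.le_last).ne
    have hi : a.succ ≤ i := Fin.castSucc_lt_iff_succ_le.mp hji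
    have hne : d a.castSucc - d i ≠ 0 := sub_ne_zero.mpr (hd.ne hji.ne)
    rw [mul_generator_apply_castSucc, diagonal_mul, Pi.neg_apply,
      leftEigenMatrix_castSucc d a hi]
    field_simp
    ring

theorem leftEigenMatrix_mul_rightEigenMatrix (hd : Function.Injective d) :
    leftEigenMatrix d * rightEigenMatrix d = 1 := by
  have hcomm : leftEigenMatrix d * rightEigenMatrix d * diagonal (-d) =
      diagonal (-d) * (leftEigenMatrix d * rightEigenMatrix d) := by
    rw [Matrix.mul_assoc, ← generator_mul_rightEigenMatrix hd, ← Matrix.mul_assoc,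
      leftEigenMatrix_mul_generator hd, Matrix.mul_assoc]
  rw [eq_diagonal_diag_of_mul_diagonal_eq (neg_injective.comp hd) hcomm, ← diagonal_one]
  congr 1
  ext i
  rw [diag_apply, (leftEigenMatrix_isLowerTriangular d).mul_apply_self
    (rightEigenMatrix_isLowerTriangular d), leftEigenMatrix_self, rightEigenMatrix_self, mul_one]

theorem generator_eq (hd : Function.Injective d) :
    generator d = rightEigenMatrix d * diagonal (-d) * leftEigenMatrix d := by
  rw [← generator_mul_rightEigenMatrix hd, Matrix.mul_assoc,
    mul_eq_one_comm.mp (leftEigenMatrix_mul_rightEigenMatrix hd), Matrix.mul_one]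

end

end PureDeath

/-- **Spectral decomposition of a pure death process.**
Let `d_1, …, d_n` (`n ≥ 1`, here indexed by `Fin (n+1)`) be pairwise distinct real
numbers, `Q` the generator matrix with `q_{ii} = -d_i`, `q_{i,i-1} = d_i` and
`q_{ij} = 0` otherwise, and `R`, `L` the triangular matrices with `r_{ij} = l_{ij} = 0`
for `i < j`, `r_{ij} = Π_{l=j+1}^i d_l/(d_l - d_j)` and
`l_{ij} = Π_{l=j}^{i-1} d_{l+1}/(d_l - d_i)` for `i ≥ j`.  Then for every `t ∈ ℝ`
and all `i, j`, the `(i, j)` entry of `exp(tQ)` equals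
`Σ_{k=j}^i e^{-d_k t} r_{ik} l_{kj}`. -/
theorem stmt_18 (n : ℕ) (d : Fin (n + 1) → ℝ) (hd : Function.Injective d)
    (Q R L : Matrix (Fin (n + 1)) (Fin (n + 1)) ℝ)
    (hQ : ∀ i j, Q i j =
      if i = j then -d i else if (i : ℕ) = (j : ℕ) + 1 then d i else 0)
    (hR : ∀ i j, R i j =
      if j ≤ i then ∏ l ∈ Finset.Ioc j i, d l / (d l - d j) else 0)
    (hL : ∀ i j, L i j =
      if j ≤ i then ∏ l ∈ Finset.Ico j i, d (l + 1) / (d l - d i) else 0) :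
    ∀ (t : ℝ) (i j : Fin (n + 1)),
      NormedSpace.exp (t • Q) i j
        = ∑ k ∈ Finset.Icc j i, Real.exp (-d k * t) * R i k * L k j := by
  intro t i j
  obtain rfl : Q = PureDeath.generator d := Matrix.ext hQ
  obtain rfl : R = PureDeath.rightEigenMatrix d := Matrix.ext hR
  obtain rfl : L = PureDeath.leftEigenMatrix d := Matrix.ext hL
  rw [PureDeath.generator_eq hd, ← Matrix.smul_mul, ← Matrix.mul_smul, ← diagonal_smul,
    exp_mul_diagonal_mul_of_mul_eq_one (PureDeath.leftEigenMatrix_mul_rightEigenMatrix hd),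
    (PureDeath.rightEigenMatrix_isLowerTriangular d).mul_diagonal_mul_apply
      (PureDeath.leftEigenMatrix_isLowerTriangular d)]
  refine sum_congr rfl fun k _ => ?_
  rw [Pi.smul_apply, Pi.neg_apply, smul_eq_mul, ← Real.exp_eq_exp_ℝ, mul_comm t]
  ring
end

section
/- Let γ be the Euler–Mascheroni constant and let m_n' := ∫_0^∞ (-log u - γ)^n e^{-u} du be the n-th central moment of the standard Gumbel distribution. Then m_n'/n! → e^{-γ} as n → ∞; equivalently, m_n' ~ n! e^{-γ} as n → ∞. -/
/-!
Split the integral at `u = e^{-c}`, where `x = -log u - c` changes sign. On `(0, e^{-c}]` the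
substitution `u = e^{-(t + c)}` turns `∫ x^n u^k du` into the Gamma integral
`e^{-c(k+1)} n! / (k+1)^{n+1}`, so pinching `1 - u ≤ e^{-u} ≤ 1` gives `n! e^{-c} + O(n! / 2^n)`.
On `(e^{-c}, ∞)` we have `|x|^n ≤ n! e^{2|x|} / 2^n = n! e^{2c} u^2 / 2^n`, so that part is
`O(n! / 2^n)` as well. Hence `|m_n / n! - e^{-c}| = O(2^{-n})` for every centre `c`.
-/

open Real MeasureTheory Set Filter Topology
open scoped Nat

lemma integrableOn_pow_mul_exp_neg_mul_Ioi (n : ℕ) {r : ℝ} (hr : 0 < r) :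
    IntegrableOn (fun t : ℝ => t ^ n * exp (-(r * t))) (Ioi 0) := by
  refine (integrableOn_rpow_mul_exp_neg_mul_rpow (s := n) (by linarith [n.cast_nonneg (α := ℝ)])
    one_pos hr).congr_fun (fun t _ => ?_) measurableSet_Ioi
  simp [rpow_natCast]

lemma integral_pow_mul_exp_neg_mul_Ioi (n : ℕ) {r : ℝ} (hr : 0 < r) :
    ∫ t in Ioi (0 : ℝ), t ^ n * exp (-(r * t)) = n ! / r ^ (n + 1) := by
  have h := integral_rpow_mul_exp_neg_mul_Ioi (a := n + 1) (by positivity) hr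
  rw [add_sub_cancel_right, Gamma_nat_eq_factorial, ← Nat.cast_add_one, rpow_natCast,
    one_div, inv_pow, inv_mul_eq_div] at h
  simpa [rpow_natCast] using h

/-- `E[(G - c) ^ n]` for a standard Gumbel variable `G`, written through `u = exp (-G)`. -/
noncomputable def gumbelMomentAbout (c : ℝ) (n : ℕ) : ℝ :=
  ∫ u in Ioi 0, (-log u - c) ^ n * exp (-u)

section GumbelMoment

variable (c : ℝ)

lemma neg_log_sub_nonneg_of_mem_Ioc {u : ℝ} (hu : u ∈ Ioc 0 (exp (-c))) : 0 ≤ -log u - c := by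
  rw [sub_nonneg, le_neg, ← log_exp (-c)]
  exact log_le_log hu.1 hu.2

lemma image_exp_neg_add_Ici :
    (fun t => exp (-(t + c))) '' Ici 0 = Ioc 0 (exp (-c)) := by
  ext u
  constructor
  · rintro ⟨t, ht, rfl⟩
    exact ⟨exp_pos _, exp_le_exp.2 (by linarith [mem_Ici.1 ht])⟩
  · intro hu
    exact ⟨-log u - c, neg_log_sub_nonneg_of_mem_Ioc c hu, by simp [exp_log hu.1]⟩

lemma hasDerivAt_exp_neg_add (t : ℝ) :
    HasDerivAt (fun t => exp (-(t + c))) (-exp (-(t + c))) t := by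
  simpa using ((hasDerivAt_id t).add_const c).neg.exp

lemma injOn_exp_neg_add : InjOn (fun t => exp (-(t + c))) (Ici 0) :=
  fun x _ y _ h => by simpa using h

lemma integral_Ioc_exp_neg_eq_integral_Ici (g : ℝ → ℝ) :
    ∫ u in Ioc 0 (exp (-c)), g u = ∫ t in Ici 0, exp (-(t + c)) * g (exp (-(t + c))) := by
  rw [← image_exp_neg_add_Ici, integral_image_eq_integral_abs_deriv_smul measurableSet_Ici
    (fun t _ => (hasDerivAt_exp_neg_add c t).hasDerivWithinAt) (injOn_exp_neg_add c)]
  simp [abs_of_pos (exp_pos _)]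

lemma integrableOn_Ioc_exp_neg_iff_integrableOn_Ici (g : ℝ → ℝ) :
    IntegrableOn g (Ioc 0 (exp (-c))) ↔
      IntegrableOn (fun t => exp (-(t + c)) * g (exp (-(t + c)))) (Ici 0) := by
  rw [← image_exp_neg_add_Ici, integrableOn_image_iff_integrableOn_abs_deriv_smul
    measurableSet_Ici (fun t _ => (hasDerivAt_exp_neg_add c t).hasDerivWithinAt)
    (injOn_exp_neg_add c)]
  simp [abs_of_pos (exp_pos _)]

lemma exp_neg_add_mul_neg_log_sub_pow_mul_pow (n k : ℕ) (t : ℝ) :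
    exp (-(t + c)) * ((-log (exp (-(t + c))) - c) ^ n * exp (-(t + c)) ^ k) =
      exp (-c) ^ (k + 1) * (t ^ n * exp (-((k + 1) * t))) := by
  rw [log_exp, show -(-(t + c)) - c = t by ring]
  simp only [← exp_nat_mul]
  rw [mul_left_comm, ← exp_add, mul_left_comm, ← exp_add]
  push_cast
  ring_nf

lemma integrableOn_neg_log_sub_pow_mul_pow_Ioc (n k : ℕ) :
    IntegrableOn (fun u => (-log u - c) ^ n * u ^ k) (Ioc 0 (exp (-c))) := by
  rw [integrableOn_Ioc_exp_neg_iff_integrableOn_Ici]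
  simp_rw [exp_neg_add_mul_neg_log_sub_pow_mul_pow]
  rw [integrableOn_Ici_iff_integrableOn_Ioi]
  exact (integrableOn_pow_mul_exp_neg_mul_Ioi n (by positivity)).const_mul _

lemma integral_neg_log_sub_pow_mul_pow_Ioc (n k : ℕ) :
    ∫ u in Ioc 0 (exp (-c)), (-log u - c) ^ n * u ^ k =
      n ! * exp (-c) ^ (k + 1) / (k + 1) ^ (n + 1) := by
  rw [integral_Ioc_exp_neg_eq_integral_Ici]
  simp_rw [exp_neg_add_mul_neg_log_sub_pow_mul_pow]
  rw [integral_Ici_eq_integral_Ioi, integral_const_mul,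
    integral_pow_mul_exp_neg_mul_Ioi n (by positivity)]
  ring

lemma measurable_neg_log_sub_pow_mul_exp_neg (n : ℕ) :
    Measurable fun u => (-log u - c) ^ n * exp (-u) := by
  fun_prop

lemma integrableOn_neg_log_sub_pow_mul_exp_neg_Ioc (n : ℕ) :
    IntegrableOn (fun u => (-log u - c) ^ n * exp (-u)) (Ioc 0 (exp (-c))) := by
  refine (integrableOn_neg_log_sub_pow_mul_pow_Ioc c n 0).mono'
    (measurable_neg_log_sub_pow_mul_exp_neg c n).aestronglyMeasurable ?_
  filter_upwards [ae_restrict_mem measurableSet_Ioc] with u hu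
  have hx := neg_log_sub_nonneg_of_mem_Ioc c hu
  rw [norm_mul, norm_of_nonneg (pow_nonneg hx n), norm_of_nonneg (exp_pos _).le, pow_zero,
    mul_one]
  exact mul_le_of_le_one_right (pow_nonneg hx n) (exp_le_one_iff.2 (by linarith [hu.1]))

lemma abs_integral_neg_log_sub_pow_mul_exp_neg_Ioc_sub_le (n : ℕ) :
    |(∫ u in Ioc 0 (exp (-c)), (-log u - c) ^ n * exp (-u)) - n ! * exp (-c)| ≤
      n ! * exp (-c) ^ 2 / 2 ^ (n + 1) := by
  have hx : ∀ u ∈ Ioc 0 (exp (-c)), 0 ≤ (-log u - c) ^ n := fun u hu =>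
    pow_nonneg (neg_log_sub_nonneg_of_mem_Ioc c hu) n
  have hint := integrableOn_neg_log_sub_pow_mul_exp_neg_Ioc c n
  have hint0 := integrableOn_neg_log_sub_pow_mul_pow_Ioc c n 0
  have hint1 := integrableOn_neg_log_sub_pow_mul_pow_Ioc c n 1
  have h0 := integral_neg_log_sub_pow_mul_pow_Ioc c n 0
  have h1 := integral_neg_log_sub_pow_mul_pow_Ioc c n 1
  simp only [pow_zero, mul_one, pow_one] at hint0 hint1
  norm_num at h0 h1
  have upper : ∫ u in Ioc 0 (exp (-c)), (-log u - c) ^ n * exp (-u) ≤ n ! * exp (-c) := by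
    rw [← h0]
    refine setIntegral_mono_on hint hint0 measurableSet_Ioc fun u hu => ?_
    exact mul_le_of_le_one_right (hx u hu) (exp_le_one_iff.2 (by linarith [hu.1]))
  have lower : n ! * exp (-c) - n ! * exp (-c) ^ 2 / 2 ^ (n + 1) ≤
      ∫ u in Ioc 0 (exp (-c)), (-log u - c) ^ n * exp (-u) := by
    rw [← h0, ← h1, ← integral_sub hint0 hint1]
    refine setIntegral_mono_on (hint0.sub hint1) hint measurableSet_Ioc fun u hu => ?_
    rw [← mul_one_sub]
    exact mul_le_mul_of_nonneg_left (by linarith [add_one_le_exp (-u)]) (hx u hu)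
  have herr : 0 ≤ (n ! : ℝ) * exp (-c) ^ 2 / 2 ^ (n + 1) := by positivity
  rw [abs_le]
  constructor <;> linarith

lemma norm_neg_log_sub_pow_mul_exp_neg_le (n : ℕ) {u : ℝ} (hu : exp (-c) < u) :
    ‖(-log u - c) ^ n * exp (-u)‖ ≤ n ! * exp (2 * c) / 2 ^ n * (u ^ 2 * exp (-u)) := by
  have hu0 : 0 < u := (exp_pos _).trans hu
  have hy : 0 ≤ log u + c := by
    linarith [(lt_log_iff_exp_lt hu0).2 hu]
  have hpow : (log u + c) ^ n ≤ n ! * exp (2 * c) / 2 ^ n * u ^ 2 := by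
    have h := pow_div_factorial_le_exp _ (mul_nonneg zero_le_two hy) n
    rw [mul_pow, div_le_iff₀ (by positivity), mul_add, exp_add, mul_comm 2 (log u),
      exp_mul, exp_log hu0, rpow_two] at h
    rw [div_mul_eq_mul_div, le_div_iff₀ (by positivity)]
    linarith
  rw [norm_mul, norm_pow, norm_of_nonneg (exp_pos _).le, norm_eq_abs,
    show -log u - c = -(log u + c) by ring, abs_neg, abs_of_nonneg hy, ← mul_assoc]
  exact mul_le_mul_of_nonneg_right hpow (exp_pos _).le

lemma integrableOn_sq_mul_exp_neg : IntegrableOn (fun u : ℝ => u ^ 2 * exp (-u)) (Ioi 0) := by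
  simpa using integrableOn_pow_mul_exp_neg_mul_Ioi 2 one_pos

lemma integrableOn_neg_log_sub_pow_mul_exp_neg_Ioi (n : ℕ) :
    IntegrableOn (fun u => (-log u - c) ^ n * exp (-u)) (Ioi (exp (-c))) :=
  (IntegrableOn.mono_set (integrableOn_sq_mul_exp_neg.const_mul _)
    (Ioi_subset_Ioi (exp_pos _).le)).mono'
    (measurable_neg_log_sub_pow_mul_exp_neg c n).aestronglyMeasurable
    ((ae_restrict_mem measurableSet_Ioi).mono fun _ hu =>
      norm_neg_log_sub_pow_mul_exp_neg_le c n hu)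

lemma abs_integral_neg_log_sub_pow_mul_exp_neg_Ioi_le (n : ℕ) :
    |∫ u in Ioi (exp (-c)), (-log u - c) ^ n * exp (-u)| ≤ 2 * n ! * exp (2 * c) / 2 ^ n := by
  set K : ℝ := n ! * exp (2 * c) / 2 ^ n
  have hdom : IntegrableOn (fun u => K * (u ^ 2 * exp (-u))) (Ioi 0) :=
    integrableOn_sq_mul_exp_neg.const_mul K
  have hsq : ∫ u in Ioi (0 : ℝ), u ^ 2 * exp (-u) = 2 := by
    simpa [Nat.factorial] using integral_pow_mul_exp_neg_mul_Ioi 2 one_pos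
  calc |∫ u in Ioi (exp (-c)), (-log u - c) ^ n * exp (-u)|
      ≤ ∫ u in Ioi (exp (-c)), K * (u ^ 2 * exp (-u)) :=
        norm_integral_le_of_norm_le (hdom.mono_set (Ioi_subset_Ioi (exp_pos _).le))
          ((ae_restrict_mem measurableSet_Ioi).mono fun _ hu =>
            norm_neg_log_sub_pow_mul_exp_neg_le c n hu)
    _ ≤ ∫ u in Ioi 0, K * (u ^ 2 * exp (-u)) :=
        setIntegral_mono_set hdom (Eventually.of_forall fun u => by positivity)
          (Ioi_subset_Ioi (exp_pos _).le).eventuallyLE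
    _ = 2 * n ! * exp (2 * c) / 2 ^ n := by
        rw [integral_const_mul, hsq]
        ring

lemma gumbelMomentAbout_eq_add (n : ℕ) :
    gumbelMomentAbout c n =
      (∫ u in Ioc 0 (exp (-c)), (-log u - c) ^ n * exp (-u)) +
        ∫ u in Ioi (exp (-c)), (-log u - c) ^ n * exp (-u) := by
  rw [gumbelMomentAbout, ← Ioc_union_Ioi_eq_Ioi (exp_pos (-c)).le,
    setIntegral_union (Ioc_disjoint_Ioi le_rfl) measurableSet_Ioi
      (integrableOn_neg_log_sub_pow_mul_exp_neg_Ioc c n)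
      (integrableOn_neg_log_sub_pow_mul_exp_neg_Ioi c n)]

lemma abs_gumbelMomentAbout_div_factorial_sub_le (n : ℕ) :
    |gumbelMomentAbout c n / (n ! : ℝ) - exp (-c)| ≤
      (exp (-c) ^ 2 / 2 + 2 * exp (2 * c)) * (1 / 2) ^ n := by
  have hfac : (0 : ℝ) < n ! := mod_cast n.factorial_pos
  have hnear := abs_integral_neg_log_sub_pow_mul_exp_neg_Ioc_sub_le c n
  have htail := abs_integral_neg_log_sub_pow_mul_exp_neg_Ioi_le c n
  have hmoment : |gumbelMomentAbout c n - n ! * exp (-c)| ≤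
      (exp (-c) ^ 2 / 2 + 2 * exp (2 * c)) * (1 / 2) ^ n * n ! := by
    rw [gumbelMomentAbout_eq_add, add_sub_right_comm]
    refine (abs_add_le _ _).trans ((add_le_add hnear htail).trans_eq ?_)
    rw [pow_succ, one_div, inv_pow]
    field_simp
    ring
  rwa [div_sub' hfac.ne', abs_div, abs_of_pos hfac, div_le_iff₀ hfac]

theorem tendsto_gumbelMomentAbout_div_factorial :
    Tendsto (fun n => gumbelMomentAbout c n / n !) atTop (𝓝 (exp (-c))) := by
  have hgeom : Tendsto (fun n : ℕ => (exp (-c) ^ 2 / 2 + 2 * exp (2 * c)) * (1 / 2 : ℝ) ^ n)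
      atTop (𝓝 0) := by
    simpa using (tendsto_pow_atTop_nhds_zero_of_lt_one (by norm_num : (0 : ℝ) ≤ 1 / 2)
      (by norm_num)).const_mul (exp (-c) ^ 2 / 2 + 2 * exp (2 * c))
  exact tendsto_iff_norm_sub_tendsto_zero.2 <| squeeze_zero (fun _ => norm_nonneg _)
    (abs_gumbelMomentAbout_div_factorial_sub_le c) hgeom

end GumbelMoment

/-- Let `γ` be the Euler–Mascheroni constant and
`m_n' = ∫_0^∞ (-log u - γ)^n e^{-u} du` the `n`-th central moment of the standard
Gumbel distribution.  Then `m_n'/n! → e^{-γ}` as `n → ∞`;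
equivalently, `m_n' ~ n! e^{-γ}`. -/
theorem stmt_19 :
    Filter.Tendsto
      (fun n : ℕ =>
        (∫ u in Set.Ioi (0 : ℝ),
            (-Real.log u - Real.eulerMascheroniConstant) ^ n * Real.exp (-u)) /
          (n.factorial : ℝ))
      Filter.atTop (nhds (Real.exp (-Real.eulerMascheroniConstant))) :=
  tendsto_gumbelMomentAbout_div_factorial eulerMascheroniConstant
end
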